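/- arXiv:1704.07647 — 7 statements merged into one kernel-verified Lean document; each statement's English description precedes it below -/
import Mathlib

section
/- Let (Ω, 𝓕, ℙ) be a probability space, let M ≥ 1 and h ≥ 1 be integers, and let r : ℕ → Ω → Fin M be a stochastic process (each r(t) measurable). Suppose there are scalars ρ̲ₛ, ρ̄ₛ ∈ [0,1] for each mode s such that almost surely, for every mode s, liminf_{k→∞} (1/k)·Σ_{t=0}^{k−1} 1[r(t)=s] ≥ ρ̲ₛ and limsup_{k→∞} (1/k)·Σ_{t=0}^{k−1} 1[r(t)=s] ≤ ρ̄ₛ. If for every sequence q ∈ (Fin M)^h there is a random variable L_q such that almost surely (1/k)·Σ_{i=0}^{k−1} 1[r̄(i)=q] converges to L_q as k→∞, then almost surely, for every mode s, ρ̲ₛ ≤ Σ_{q ∈ (Fin M)^h} (c_s(q)/h)·L_q ≤ ρ̄ₛ. -/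
open Filter MeasureTheory Topology

noncomputable section

/-- `modeCount M h s q` is `c_s(q)`: the number of indices `j` with `q j = s`. -/
def modeCount (M h : ℕ) (s : Fin M) (q : Fin h → Fin M) : ℕ :=
  (Finset.univ.filter fun j : Fin h => q j = s).card

/-- **Lemma 1 of the paper.**  Let `r : ℕ → Ω → Fin M` be a stochastic process whose
long-run mode-activity averages are a.s. bounded below by `ρ̲ₛ` and above by `ρ̄ₛ`.
If for every `h`-length sequence `q` the averages `(1/k)·Σ_{i<k} 1[r̄(i)=q]` converge
a.s. to a random variable `L q`, then a.s. for every mode `s`,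
`ρ̲ₛ ≤ Σ_q (c_s(q)/h)·L_q ≤ ρ̄ₛ`. -/
theorem stmt_0 {Ω : Type*} [MeasurableSpace Ω] (μ : Measure Ω) [IsProbabilityMeasure μ]
    (M h : ℕ) (hM : 1 ≤ M) (hh : 1 ≤ h)
    (r : ℕ → Ω → Fin M) (hmeas : ∀ t, Measurable (r t))
    (ρlo ρhi : Fin M → ℝ)
    (hlo01 : ∀ s, ρlo s ∈ Set.Icc (0 : ℝ) 1) (hhi01 : ∀ s, ρhi s ∈ Set.Icc (0 : ℝ) 1)
    (hbounds : ∀ᵐ ω ∂μ, ∀ s : Fin M,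
      ρlo s ≤ liminf (fun k : ℕ =>
        (1 / (k : ℝ)) * ∑ t ∈ Finset.range k, (if r t ω = s then (1 : ℝ) else 0)) atTop ∧
      limsup (fun k : ℕ =>
        (1 / (k : ℝ)) * ∑ t ∈ Finset.range k, (if r t ω = s then (1 : ℝ) else 0)) atTop
        ≤ ρhi s)
    (L : (Fin h → Fin M) → Ω → ℝ)
    (hL : ∀ q : Fin h → Fin M, ∀ᵐ ω ∂μ,
      Tendsto (fun k : ℕ => (1 / (k : ℝ)) * ∑ i ∈ Finset.range k,
          (if (fun j : Fin h => r (i * h + (j : ℕ)) ω) = q then (1 : ℝ) else 0))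
        atTop (𝓝 (L q ω))) :
    ∀ᵐ ω ∂μ, ∀ s : Fin M,
      ρlo s ≤ (∑ q : Fin h → Fin M, ((modeCount M h s q : ℝ) / (h : ℝ)) * L q ω) ∧
      (∑ q : Fin h → Fin M, ((modeCount M h s q : ℝ) / (h : ℝ)) * L q ω) ≤ ρhi s := by
  have hL' : ∀ᵐ ω ∂μ, ∀ q : Fin h → Fin M,
      Tendsto (fun k : ℕ => (1 / (k : ℝ)) * ∑ i ∈ Finset.range k,
          (if (fun j : Fin h => r (i * h + (j : ℕ)) ω) = q then (1 : ℝ) else 0))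
        atTop (𝓝 (L q ω)) := ae_all_iff.2 hL
  filter_upwards [hbounds, hL'] with ω hω1 hω2 s
  -- notation
  set ind : ℕ → ℝ := fun t => if r t ω = s then (1 : ℝ) else 0 with hind
  set f : ℕ → ℝ := fun n => (1 / (n : ℝ)) * ∑ t ∈ Finset.range n, ind t with hf
  set S : ℝ := ∑ q : Fin h → Fin M, ((modeCount M h s q : ℝ) / (h : ℝ)) * L q ω with hS
  have hhpos : (0 : ℝ) < h := by exact_mod_cast hh
  -- inner block identity
  have hinner : ∀ i : ℕ, (∑ j ∈ Finset.range h, ind (i * h + j))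
      = ∑ q : Fin h → Fin M, (modeCount M h s q : ℝ) *
          (if (fun j : Fin h => r (i * h + (j : ℕ)) ω) = q then (1 : ℝ) else 0) := by
    intro i
    have : (∑ q : Fin h → Fin M, (modeCount M h s q : ℝ) *
          (if (fun j : Fin h => r (i * h + (j : ℕ)) ω) = q then (1 : ℝ) else 0))
        = (modeCount M h s (fun j : Fin h => r (i * h + (j : ℕ)) ω) : ℝ) := by
      rw [Finset.sum_eq_single (fun j : Fin h => r (i * h + (j : ℕ)) ω)]
      · simp
      · intro q _ hq
        simp [Ne.symm hq]
      · simp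
    rw [this, modeCount, Finset.card_filter]
    push_cast
    try rw [← Fin.sum_univ_eq_sum_range (fun j => ind (i * h + j)) h]
    try simp [hind]
  -- block decomposition of the sum
  have hblock : ∀ k : ℕ, (∑ t ∈ Finset.range (k * h), ind t)
      = ∑ i ∈ Finset.range k, ∑ j ∈ Finset.range h, ind (i * h + j) := by
    intro k
    induction k with
    | zero => simp
    | succ k ih =>
      rw [Nat.succ_mul, Finset.sum_range_add, ih, Finset.sum_range_succ]
  -- the subsequence along multiples of h converges to S
  have hsub : Tendsto (fun k : ℕ => f (k * h)) atTop (𝓝 S) := by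
    have hEq : ∀ k : ℕ, f (k * h) = ∑ q : Fin h → Fin M,
        ((modeCount M h s q : ℝ) / (h : ℝ)) *
          ((1 / (k : ℝ)) * ∑ i ∈ Finset.range k,
            (if (fun j : Fin h => r (i * h + (j : ℕ)) ω) = q then (1 : ℝ) else 0)) := by
      intro k
      have h1 : f (k * h) = (1 / (k : ℝ)) * (1 / (h : ℝ)) *
          ∑ i ∈ Finset.range k, ∑ q : Fin h → Fin M, (modeCount M h s q : ℝ) *
            (if (fun j : Fin h => r (i * h + (j : ℕ)) ω) = q then (1 : ℝ) else 0) := by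
        simp only [hf, hblock k]
        rw [one_div_mul_one_div]
        push_cast
        congr 1
        exact Finset.sum_congr rfl fun i _ => hinner i
      rw [h1, Finset.sum_comm]
      rw [Finset.mul_sum]
      refine Finset.sum_congr rfl fun q _ => ?_
      simp only [Finset.mul_sum]
      refine Finset.sum_congr rfl fun i _ => ?_
      ring
    simp only [hEq]
    rw [hS]
    exact tendsto_finset_sum _ fun q _ => (hω2 q).const_mul _
  -- f is in [0,1]
  have hf01 : ∀ n, 0 ≤ f n ∧ f n ≤ 1 := by
    intro n
    constructor
    · apply mul_nonneg
      · positivity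
      · apply Finset.sum_nonneg
        intro t _
        simp only [hind]
        positivity
    · rcases Nat.eq_zero_or_pos n with hn | hn
      · simp [hf, hn]
      · have hsum : (∑ t ∈ Finset.range n, ind t) ≤ n := by
          calc (∑ t ∈ Finset.range n, ind t) ≤ ∑ t ∈ Finset.range n, 1 := by
                apply Finset.sum_le_sum
                intro t _
                simp only [hind]
                split <;> norm_num
            _ = n := by simp
        have hnpos : (0 : ℝ) < n := by exact_mod_cast hn
        rw [hf]
        calc (1 / (n : ℝ)) * ∑ t ∈ Finset.range n, ind t
            ≤ (1 / (n : ℝ)) * n := by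
              apply mul_le_mul_of_nonneg_left hsum
              positivity
          _ = 1 := by field_simp
  have hbdd_le : IsBoundedUnder (· ≤ ·) atTop f :=
    isBoundedUnder_of ⟨1, fun n => (hf01 n).2⟩
  have hbdd_ge : IsBoundedUnder (· ≥ ·) atTop f :=
    isBoundedUnder_of ⟨0, fun n => (hf01 n).1⟩
  have hφ : Tendsto (fun k : ℕ => k * h) atTop atTop :=
    tendsto_atTop_mono (fun k => Nat.le_mul_of_pos_right k hh) tendsto_id
  -- liminf f ≤ S
  have hliminf : liminf f atTop ≤ S := by
    apply le_of_forall_pos_le_add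
    intro ε hε
    have hfreq : ∃ᶠ n in atTop, f n ≤ S + ε := by
      apply hφ.frequently
      apply Eventually.frequently
      filter_upwards [hsub.eventually (eventually_le_nhds (by linarith : S < S + ε))] with k hk
        using hk
    exact liminf_le_of_frequently_le hfreq hbdd_ge
  -- S ≤ limsup f
  have hlimsup : S ≤ limsup f atTop := by
    apply le_of_forall_sub_le
    intro ε hε
    have hfreq : ∃ᶠ n in atTop, S - ε ≤ f n := by
      apply hφ.frequently
      apply Eventually.frequently
      filter_upwards [hsub.eventually (eventually_ge_nhds (by linarith : S - ε < S))] with k hk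
        using hk
    exact le_limsup_of_frequently_le hfreq hbdd_le
  exact ⟨le_trans (hω1 s).1 hliminf, le_trans hlimsup (hω1 s).2⟩

end
end

section
/- Let (Ω, 𝓕, ℙ) be a probability space, M ≥ 1, h ≥ 1, n ≥ 1 integers, A_s ∈ ℝ^{n×n} for each mode s ∈ Fin M, and r : ℕ → Ω → Fin M a stochastic process (each r(t) measurable). For an initial state x₀ ∈ ℝⁿ, define the solution x(t, ω) = A_{r(t−1,ω)} ⋯ A_{r(1,ω)} A_{r(0,ω)} x₀ (with x(0, ω) = x₀). Assume: (i) there are scalars ρ̲ₛ, ρ̄ₛ ∈ [0,1] such that almost surely, for every mode s, liminf_{k→∞} (1/k)·Σ_{t=0}^{k−1} 1[r(t)=s] ≥ ρ̲ₛ and limsup_{k→∞} (1/k)·Σ_{t=0}^{k−1} 1[r(t)=s] ≤ ρ̄ₛ; (ii) for every q ∈ (Fin M)^h, (1/k)·Σ_{i=0}^{k−1} 1[r̄(i)=q] converges almost surely as k→∞; (iii) there exist a vector norm μ on ℝⁿ (μ(x) ≥ 0 with μ(x) = 0 iff x = 0, μ(c·x) = |c|·μ(x), μ(x+y) ≤ μ(x)+μ(y)),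 with induced matrix norm ν(N) = sup_{x ≠ 0} μ(Nx)/μ(x), and a scalar ε ∈ (0,1), such that for every ρ : (Fin M)^h → [0,1] in the LP1 feasible set F_h one has Σ_{q ∈ (Fin M)^h} γ_q · ρ_q < 0, where γ_q = ln ν(Γ_q) if Γ_q ≠ 0 and γ_q = ln ε if Γ_q = 0. Then: (a) for every ε' > 0 and p̄ > 0 there exists δ > 0 such that whenever the initial state satisfies ‖x₀‖₂ < δ, ℙ[sup_{t ∈ ℕ} ‖x(t)‖₂ > ε'] < p̄; and (b) for every initial state x₀, ℙ[lim_{t→∞} ‖x(t)‖₂ = 0] = 1. -/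
/-!
Fix a sample path and let `f_k(q)` be the frequency of the block `q` among the first `k` blocks
`r̄(0), …, r̄(k-1)`. Since `μ(Γ_q x) ≤ exp(γ_q) μ(x)`, the state at block boundaries satisfies
`μ(x(kh)) ≤ exp(Σ_{i<k} γ_{r̄(i)}) μ(x₀) = exp(k Σ_q γ_q f_k(q)) μ(x₀)`.
Almost surely `f_k → ρ`, and `ρ` lies in the LP1 feasible set: it is a probability vector, and
`Σ_q (c_s(q)/h) ρ_q` is the limit of the activity average of mode `s` along the times `kh`, hence
lies between its liminf and limsup. So `Σ_q γ_q ρ_q < 0`, the exponent tends to `-∞`, and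
`x(t) → 0` because inside a block the state grows by a bounded factor; `μ` is equivalent to
`‖·‖₂` on `ℝⁿ`, so this is convergence in the Euclidean norm too.

For stability, `x(t) = Σ_j x₀_j x^{(j)}(t)` where `x^{(j)}` starts from the `j`-th basis vector.
These finitely many solutions converge, so they are almost surely bounded; hence their sum is
bounded by a constant `C` outside an event of probability `< p̄`, and `δ = ε' / C` works.
-/

open Filter MeasureTheory Topology

noncomputable section

/-- `Γ_q = A_{q_h} A_{q_{h−1}} ⋯ A_{q_1}` (with `q` indexed from `0`). -/
def Gamma (M h n : ℕ) (A : Fin M → Matrix (Fin n) (Fin n) ℝ)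
    (q : Fin h → Fin M) : Matrix (Fin n) (Fin n) ℝ :=
  (((List.finRange h).reverse.map fun j => A (q j)).prod)

def euclNorm (n : ℕ) (x : Fin n → ℝ) : ℝ :=
  Real.sqrt (∑ i, (x i) ^ 2)

open Finset Matrix

structure IsVectorNorm {E : Type*} [AddCommGroup E] [Module ℝ E] (f : E → ℝ) : Prop where
  nonneg : ∀ x, 0 ≤ f x
  eq_zero_iff : ∀ x, f x = 0 ↔ x = 0
  smul : ∀ (c : ℝ) x, f (c • x) = |c| * f x
  add_le : ∀ x y, f (x + y) ≤ f x + f y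

namespace IsVectorNorm

section AddCommGroup

variable {E : Type*} [AddCommGroup E] [Module ℝ E] {f : E → ℝ} (hf : IsVectorNorm f)
include hf

lemma map_zero : f 0 = 0 := by simpa using hf.smul 0 0

lemma pos {x : E} (hx : x ≠ 0) : 0 < f x :=
  (hf.nonneg x).lt_of_ne' (mt (hf.eq_zero_iff x).1 hx)

lemma abs_sub_le (x y : E) : |f x - f y| ≤ f (x - y) := by
  have hxy := hf.add_le (x - y) y
  have hyx := hf.add_le (y - x) x
  have hsymm : f (y - x) = f (x - y) := by
    simpa [neg_sub] using hf.smul (-1) (x - y)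
  rw [sub_add_cancel] at hxy
  rw [sub_add_cancel, hsymm] at hyx
  exact abs_sub_le_iff.2 ⟨by linarith, by linarith⟩

lemma sum_smul_le_norm_mul {ι : Type*} [Fintype ι] (c : ι → ℝ) (v : ι → E) :
    f (∑ j, c j • v j) ≤ ‖c‖ * ∑ j, f (v j) :=
  calc f (∑ j, c j • v j) ≤ ∑ j, f (c j • v j) :=
        le_sum_of_subadditive f hf.map_zero.le hf.add_le _ _
    _ = ∑ j, |c j| * f (v j) := by simp only [hf.smul]
    _ ≤ ∑ j, ‖c‖ * f (v j) := by
        gcongr with j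
        · exact hf.nonneg _
        · exact norm_le_pi_norm c j
    _ = ‖c‖ * ∑ j, f (v j) := (mul_sum _ _ _).symm

end AddCommGroup

variable {ι : Type*} [Fintype ι] {f : (ι → ℝ) → ℝ} (hf : IsVectorNorm f)
include hf

lemma exists_le_mul_norm : ∃ C, 0 ≤ C ∧ ∀ x, f x ≤ C * ‖x‖ := by
  classical
  refine ⟨∑ j, f (Pi.single j 1), sum_nonneg fun j _ => hf.nonneg _, fun x => ?_⟩
  rw [mul_comm]
  conv_lhs => rw [pi_eq_sum_univ' x]
  exact hf.sum_smul_le_norm_mul x _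

lemma continuous : Continuous f := by
  obtain ⟨C, hC0, hC⟩ := hf.exists_le_mul_norm
  refine (LipschitzWith.of_dist_le_mul (K := ⟨C, hC0⟩) fun x y => ?_).continuous
  rw [Real.dist_eq, dist_eq_norm]
  exact (hf.abs_sub_le x y).trans (hC _)

lemma exists_pos_mul_norm_le : ∃ c, 0 < c ∧ ∀ x, c * ‖x‖ ≤ f x := by
  have hsphere {x : ι → ℝ} (hx : x ≠ 0) : ‖x‖⁻¹ • x ∈ Metric.sphere (0 : ι → ℝ) 1 := by
    simpa using norm_smul_inv_norm (𝕜 := ℝ) hx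
  have hscale {c : ℝ} (x : ι → ℝ) (hc : ∀ x ≠ 0, c ≤ f (‖x‖⁻¹ • x)) : c * ‖x‖ ≤ f x := by
    rcases eq_or_ne x 0 with rfl | hx
    · simp [hf.map_zero]
    · have := hc x hx
      rw [hf.smul, abs_inv, abs_norm, le_inv_mul_iff₀ (norm_pos_iff.2 hx), mul_comm] at this
      exact this
  -- `f` is continuous, so it has a positive minimum on the compact unit sphere.
  by_cases hne : (Metric.sphere (0 : ι → ℝ) 1).Nonempty
  · obtain ⟨z, hz, hmin⟩ :=
      (isCompact_sphere (0 : ι → ℝ) 1).exists_isMinOn hne hf.continuous.continuousOn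
    have hz0 : z ≠ 0 := ne_zero_of_mem_unit_sphere (⟨z, hz⟩ : Metric.sphere (0 : ι → ℝ) 1)
    exact ⟨f z, hf.pos hz0, fun x => hscale x fun y hy => hmin (hsphere hy)⟩
  · exact ⟨1, one_pos, fun x => hscale x fun y hy => absurd ⟨_, hsphere hy⟩ hne⟩

lemma exists_le_mul {g : (ι → ℝ) → ℝ} (hg : IsVectorNorm g) : ∃ K, ∀ x, g x ≤ K * f x := by
  obtain ⟨C, hC0, hC⟩ := hg.exists_le_mul_norm
  obtain ⟨c, hc, hcf⟩ := hf.exists_pos_mul_norm_le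
  refine ⟨C / c, fun x => (hC x).trans ?_⟩
  calc C * ‖x‖ = C / c * (c * ‖x‖) := by field_simp
    _ ≤ C / c * f x := by gcongr; exact hcf x

lemma exists_mulVec_le (N : Matrix ι ι ℝ) : ∃ K, ∀ x, f (N *ᵥ x) ≤ K * f x := by
  classical
  obtain ⟨C, hC0, hC⟩ := hf.exists_le_mul_norm
  obtain ⟨c, hc, hcf⟩ := hf.exists_pos_mul_norm_le
  set T := LinearMap.toContinuousLinearMap (Matrix.mulVecLin N)
  refine ⟨C * ‖T‖ / c, fun x => (hC _).trans ?_⟩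
  calc C * ‖N *ᵥ x‖ = C * ‖T x‖ := rfl
    _ ≤ C * (‖T‖ * ‖x‖) := by gcongr; exact T.le_opNorm x
    _ = C * ‖T‖ / c * (c * ‖x‖) := by field_simp
    _ ≤ C * ‖T‖ / c * f x := by gcongr; exact hcf x

end IsVectorNorm

lemma euclNorm_eq_norm (n : ℕ) (x : Fin n → ℝ) :
    euclNorm n x = ‖(WithLp.toLp 2 x : EuclideanSpace ℝ (Fin n))‖ := by
  simp [euclNorm, EuclideanSpace.norm_eq]

lemma isVectorNorm_euclNorm (n : ℕ) : IsVectorNorm (euclNorm n) where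
  nonneg x := Real.sqrt_nonneg _
  eq_zero_iff x := by simp [euclNorm_eq_norm]
  smul c x := by simp [euclNorm_eq_norm, norm_smul]
  add_le x y := by simpa [euclNorm_eq_norm] using norm_add_le _ _

lemma norm_le_euclNorm (n : ℕ) (x : Fin n → ℝ) : ‖x‖ ≤ euclNorm n x := by
  refine (pi_norm_le_iff_of_nonneg ((isVectorNorm_euclNorm n).nonneg x)).2 fun i => ?_
  rw [euclNorm_eq_norm]
  exact PiLp.norm_apply_le (WithLp.toLp 2 x) i

section InducedNorm

variable {ι : Type*} [Fintype ι]

def inducedNorm (f : (ι → ℝ) → ℝ) (N : Matrix ι ι ℝ) : ℝ :=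
  ⨆ x : {x : ι → ℝ // x ≠ 0}, f (N *ᵥ (x : ι → ℝ)) / f (x : ι → ℝ)

/-- The exponent `γ_q` of the LP objective is `logGain ν ε (Γ_q)`. -/
def logGain (ν : Matrix ι ι ℝ → ℝ) (ε : ℝ) (N : Matrix ι ι ℝ) : ℝ :=
  if N = 0 then Real.log ε else Real.log (ν N)

namespace IsVectorNorm

variable {f : (ι → ℝ) → ℝ} (hf : IsVectorNorm f)
include hf

lemma map_mulVec_le (N : Matrix ι ι ℝ) (x : ι → ℝ) : f (N *ᵥ x) ≤ inducedNorm f N * f x := by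
  rcases eq_or_ne x 0 with rfl | hx
  · simp [hf.map_zero]
  obtain ⟨K, hK⟩ := hf.exists_mulVec_le N
  have hbdd : BddAbove (Set.range fun y : {y : ι → ℝ // y ≠ 0} => f (N *ᵥ (y : ι → ℝ)) / f y) :=
    ⟨K, by
      rintro _ ⟨⟨y, hy⟩, rfl⟩
      exact (div_le_iff₀ (hf.pos hy)).2 (hK y)⟩
  have hratio : f (N *ᵥ x) / f x ≤ inducedNorm f N := le_ciSup hbdd ⟨x, hx⟩
  rwa [div_le_iff₀ (hf.pos hx)] at hratio

lemma inducedNorm_pos {N : Matrix ι ι ℝ} (hN : N ≠ 0) : 0 < inducedNorm f N := by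
  classical
  obtain ⟨x, hNx⟩ : ∃ x, N *ᵥ x ≠ 0 := by
    by_contra! h
    exact hN (Matrix.toLin'.injective (LinearMap.ext fun x => by simpa using h x))
  have hx : x ≠ 0 := by rintro rfl; simp at hNx
  exact pos_of_mul_pos_left ((hf.pos hNx).trans_le (hf.map_mulVec_le N x)) (hf.nonneg x)

lemma map_mulVec_le_exp_logGain (ε : ℝ) (N : Matrix ι ι ℝ) (x : ι → ℝ) :
    f (N *ᵥ x) ≤ Real.exp (logGain (inducedNorm f) ε N) * f x := by
  unfold logGain
  split_ifs with hN
  · simpa [hN, hf.map_zero] using mul_nonneg (Real.exp_pos (Real.log ε)).le (hf.nonneg x)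
  · rw [Real.exp_log (hf.inducedNorm_pos hN)]
    exact hf.map_mulVec_le N x

end IsVectorNorm

end InducedNorm

section EmpiricalFreq

variable {α : Type*} [DecidableEq α]

/-- Since `1 / 0 = 0` in `ℝ`, this is `0` at `k = 0`; the identities below hold for all `k`. -/
def empiricalFreq (v : ℕ → α) (a : α) (k : ℕ) : ℝ :=
  1 / (k : ℝ) * ∑ i ∈ range k, if v i = a then 1 else 0

variable (v : ℕ → α)

lemma empiricalFreq_nonneg (a : α) (k : ℕ) : 0 ≤ empiricalFreq v a k :=
  mul_nonneg (by positivity) (sum_nonneg fun _ _ => by split_ifs <;> norm_num)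

lemma empiricalFreq_le_one (a : α) (k : ℕ) : empiricalFreq v a k ≤ 1 := by
  rcases eq_or_ne k 0 with rfl | hk
  · simp [empiricalFreq]
  have hsum : ∑ i ∈ range k, (if v i = a then (1 : ℝ) else 0) ≤ k := by
    simpa using sum_le_sum fun i (_ : i ∈ range k) => (by split_ifs <;> norm_num :
      (if v i = a then (1 : ℝ) else 0) ≤ 1)
  rw [empiricalFreq, one_div, inv_mul_le_one₀ (by positivity)]
  exact hsum

lemma sum_range_comp_eq_mul_sum_mul_empiricalFreq [Fintype α] (g : α → ℝ) (k : ℕ) :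
    ∑ i ∈ range k, g (v i) = k * ∑ a, g a * empiricalFreq v a k := by
  rcases eq_or_ne k 0 with rfl | hk
  · simp
  calc ∑ i ∈ range k, g (v i) = ∑ a, g a * ∑ i ∈ range k, if v i = a then 1 else 0 := by
        simp_rw [mul_sum, mul_ite, mul_one, mul_zero]
        rw [sum_comm]
        simp
    _ = k * ∑ a, g a * empiricalFreq v a k := by
        rw [mul_sum]
        refine sum_congr rfl fun a _ => ?_
        rw [empiricalFreq]
        field_simp

lemma sum_empiricalFreq [Fintype α] {k : ℕ} (hk : k ≠ 0) : ∑ a, empiricalFreq v a k = 1 := by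
  have h := sum_range_comp_eq_mul_sum_mul_empiricalFreq v (fun _ => 1) k
  simp only [sum_const, card_range, nsmul_eq_mul, mul_one, one_mul] at h
  exact (mul_eq_left₀ (Nat.cast_ne_zero.2 hk)).1 h.symm

variable {v}

lemma mem_Icc_of_tendsto_empiricalFreq {a : α} {l : ℝ}
    (h : Tendsto (empiricalFreq v a) atTop (𝓝 l)) : l ∈ Set.Icc (0 : ℝ) 1 :=
  ⟨ge_of_tendsto' h (empiricalFreq_nonneg v a), le_of_tendsto' h (empiricalFreq_le_one v a)⟩

lemma sum_eq_one_of_tendsto_empiricalFreq [Fintype α] {L : α → ℝ}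
    (h : ∀ a, Tendsto (empiricalFreq v a) atTop (𝓝 (L a))) : ∑ a, L a = 1 :=
  tendsto_nhds_unique (tendsto_finsetSum _ fun a _ => h a) <|
    tendsto_const_nhds.congr' <| eventually_atTop.2 ⟨1, fun _ hk =>
      (sum_empiricalFreq v (Nat.one_le_iff_ne_zero.1 hk)).symm⟩

end EmpiricalFreq

/-- `block σ h i` is the lifted signal `σ̄(i) = (σ(ih), …, σ(ih + h - 1))`. -/
def block {α : Type*} (σ : ℕ → α) (h i : ℕ) : Fin h → α := fun j => σ (i * h + j)

section ModeFrequencies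

variable {M h : ℕ} (σ : ℕ → Fin M) (s : Fin M)

lemma sum_range_ite_eq_modeCount_block (i : ℕ) :
    ∑ j ∈ range h, (if σ (i * h + j) = s then (1 : ℝ) else 0) = modeCount M h s (block σ h i) := by
  rw [← Fin.sum_univ_eq_sum_range (fun j => if σ (i * h + j) = s then (1 : ℝ) else 0),
    modeCount, natCast_card_filter]
  rfl

lemma sum_range_mul_ite_eq_sum_modeCount (k : ℕ) :
    ∑ t ∈ range (k * h), (if σ t = s then (1 : ℝ) else 0) =
      ∑ i ∈ range k, (modeCount M h s (block σ h i) : ℝ) := by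
  induction k with
  | zero => simp
  | succ k ih =>
    rw [Nat.succ_mul, sum_range_add, ih, sum_range_succ, sum_range_ite_eq_modeCount_block]

lemma empiricalFreq_mul_eq_sum (k : ℕ) :
    empiricalFreq σ s (k * h) =
      ∑ q, (modeCount M h s q : ℝ) / h * empiricalFreq (block σ h) q k := by
  rcases eq_or_ne k 0 with rfl | hk
  · simp [empiricalFreq]
  rw [empiricalFreq, sum_range_mul_ite_eq_sum_modeCount,
    sum_range_comp_eq_mul_sum_mul_empiricalFreq (block σ h) (fun q => (modeCount M h s q : ℝ)),
    mul_sum, mul_sum]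
  refine sum_congr rfl fun q _ => ?_
  rcases eq_or_ne h 0 with rfl | hh
  · simp
  field_simp
  push_cast
  ring

end ModeFrequencies

lemma liminf_le_sum_and_sum_le_limsup {M h : ℕ} (hh : 0 < h) {σ : ℕ → Fin M}
    {L : (Fin h → Fin M) → ℝ} (hL : ∀ q, Tendsto (empiricalFreq (block σ h) q) atTop (𝓝 (L q)))
    (s : Fin M) :
    liminf (empiricalFreq σ s) atTop ≤ ∑ q, (modeCount M h s q : ℝ) / h * L q ∧
      ∑ q, (modeCount M h s q : ℝ) / h * L q ≤ limsup (empiricalFreq σ s) atTop := by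
  have hφ : Tendsto (· * h) atTop atTop :=
    tendsto_atTop_atTop.2 fun b => ⟨b, fun t ht => ht.trans (Nat.le_mul_of_pos_right t hh)⟩
  have hsub : Tendsto (empiricalFreq σ s ∘ (· * h)) atTop
      (𝓝 (∑ q, (modeCount M h s q : ℝ) / h * L q)) := by
    have := tendsto_finsetSum univ fun q _ => (hL q).const_mul ((modeCount M h s q : ℝ) / h)
    simpa only [Function.comp_def, empiricalFreq_mul_eq_sum] using this
  have hle {l : Filter ℕ} : IsBoundedUnder (· ≤ ·) l (empiricalFreq σ s) :=
    isBoundedUnder_of ⟨1, empiricalFreq_le_one σ s⟩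
  have hge {l : Filter ℕ} : IsBoundedUnder (· ≥ ·) l (empiricalFreq σ s) :=
    isBoundedUnder_of ⟨0, empiricalFreq_nonneg σ s⟩
  constructor
  · rw [← hsub.liminf_eq]
    exact hφ.liminf_le_liminf_comp hle.isCoboundedUnder_ge hge
  · rw [← hsub.limsup_eq]
    exact hφ.limsup_comp_le_limsup hge.isCoboundedUnder_le hle

section Trajectory

variable {M n : ℕ} (A : Fin M → Matrix (Fin n) (Fin n) ℝ)

lemma Gamma_zero (q : Fin 0 → Fin M) : Gamma M 0 n A q = 1 := by
  simp [Gamma]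

lemma Gamma_succ {k : ℕ} (q : Fin (k + 1) → Fin M) :
    Gamma M (k + 1) n A q = Gamma M k n A (fun j => q j.succ) * A (q 0) := by
  simp [Gamma, List.finRange_succ, List.map_reverse, List.map_map, Function.comp_def]

variable {A} {σ : ℕ → Fin M} {x : ℕ → Fin n → ℝ} (hx : ∀ t, x (t + 1) = A (σ t) *ᵥ x t)
include hx

lemma trajectory_add_eq_Gamma_mulVec (m k : ℕ) :
    x (m + k) = Gamma M k n A (fun j => σ (m + j)) *ᵥ x m := by
  induction k generalizing m with
  | zero => simp [Gamma_zero]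
  | succ k ih =>
    rw [← add_assoc, add_right_comm, ih, hx, Gamma_succ, ← mulVec_mulVec]
    simp [add_right_comm, add_assoc]

lemma trajectory_le_pow_mul {f : (Fin n → ℝ) → ℝ} {D : ℝ} (hD0 : 0 ≤ D)
    (hD : ∀ s y, f (A s *ᵥ y) ≤ D * f y) (m k : ℕ) : f (x (m + k)) ≤ D ^ k * f (x m) := by
  induction k with
  | zero => simp
  | succ k ih =>
    rw [← add_assoc, hx, pow_succ', mul_assoc]
    exact (hD _ _).trans (mul_le_mul_of_nonneg_left ih hD0)

lemma trajectory_blocks_le_exp_sum_mul {f : (Fin n → ℝ) → ℝ} {g : Matrix (Fin n) (Fin n) ℝ → ℝ}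
    (hg : ∀ N y, f (N *ᵥ y) ≤ Real.exp (g N) * f y) (h k : ℕ) :
    f (x (k * h)) ≤ Real.exp (∑ i ∈ range k, g (Gamma M h n A (block σ h i))) * f (x 0) := by
  induction k with
  | zero => simp
  | succ k ih =>
    rw [Nat.succ_mul, trajectory_add_eq_Gamma_mulVec hx, sum_range_succ, Real.exp_add,
      mul_comm (Real.exp _), mul_assoc]
    exact (hg _ _).trans (mul_le_mul_of_nonneg_left ih (Real.exp_pos _).le)

theorem tendsto_trajectory_zero {h : ℕ} (hh : 0 < h) {f : (Fin n → ℝ) → ℝ} (hf0 : ∀ y, 0 ≤ f y)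
    {g : Matrix (Fin n) (Fin n) ℝ → ℝ} (hg : ∀ N y, f (N *ᵥ y) ≤ Real.exp (g N) * f y)
    {L : (Fin h → Fin M) → ℝ} (hL : ∀ q, Tendsto (empiricalFreq (block σ h) q) atTop (𝓝 (L q)))
    (hneg : ∑ q, g (Gamma M h n A q) * L q < 0) :
    Tendsto (fun t => f (x t)) atTop (𝓝 0) := by
  set D := 1 + ∑ s, Real.exp (g (A s))
  have hD1 : 1 ≤ D := le_add_of_nonneg_right (sum_nonneg fun _ _ => (Real.exp_pos _).le)
  have hD : ∀ s y, f (A s *ᵥ y) ≤ D * f y := fun s y =>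
    (hg _ y).trans <| mul_le_mul_of_nonneg_right
      ((single_le_sum (f := fun s => Real.exp (g (A s))) (fun _ _ => (Real.exp_pos _).le)
        (mem_univ s)).trans (le_add_of_nonneg_left zero_le_one)) (hf0 y)
  have hexp : Tendsto (fun k : ℕ =>
      Real.exp (k * ∑ q, g (Gamma M h n A q) * empiricalFreq (block σ h) q k)) atTop (𝓝 0) :=
    Real.tendsto_exp_atBot.comp <| tendsto_natCast_atTop_atTop.atTop_mul_neg hneg <|
      tendsto_finsetSum _ fun q _ => (hL q).const_mul _
  have hblocks : Tendsto (fun k => f (x (k * h))) atTop (𝓝 0) := by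
    refine squeeze_zero (fun _ => hf0 _) (fun k => ?_) (by simpa using hexp.mul_const (f (x 0)))
    rw [← sum_range_comp_eq_mul_sum_mul_empiricalFreq (block σ h) (fun q => g (Gamma M h n A q))]
    exact trajectory_blocks_le_exp_sum_mul hx hg h k
  have hwithin (t : ℕ) : f (x t) ≤ D ^ h * f (x (t / h * h)) := by
    calc f (x t) = f (x (t / h * h + t % h)) := by rw [Nat.div_add_mod']
      _ ≤ D ^ (t % h) * f (x (t / h * h)) := trajectory_le_pow_mul hx (by linarith) hD _ _
      _ ≤ D ^ h * f (x (t / h * h)) :=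
        mul_le_mul_of_nonneg_right (pow_le_pow_right₀ hD1 (Nat.mod_lt t hh).le) (hf0 _)
  exact squeeze_zero (fun _ => hf0 _) hwithin <| by
    simpa using (hblocks.comp (Nat.tendsto_div_const_atTop hh.ne')).const_mul (D ^ h)

end Trajectory

section Solutions

variable {M n : ℕ} (A : Fin M → Matrix (Fin n) (Fin n) ℝ)

lemma trajectory_eq_sum_smul {σ : ℕ → Fin M} (X : (Fin n → ℝ) → ℕ → Fin n → ℝ)
    (hX0 : ∀ x₀, X x₀ 0 = x₀) (hXs : ∀ x₀ t, X x₀ (t + 1) = A (σ t) *ᵥ X x₀ t)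
    (x₀ : Fin n → ℝ) (t : ℕ) : X x₀ t = ∑ j, x₀ j • X (Pi.single j 1) t := by
  induction t with
  | zero => simpa [hX0] using pi_eq_sum_univ' x₀
  | succ t ih => simp only [hXs, ih, mulVec_sum, mulVec_smul]

variable {Ω : Type*} [MeasurableSpace Ω] {r : ℕ → Ω → Fin M}

lemma measurable_trajectory (hr : ∀ t, Measurable (r t)) {Y : ℕ → Ω → Fin n → ℝ}
    (hY0 : Measurable (Y 0)) (hY : ∀ t ω, Y (t + 1) ω = A (r t ω) *ᵥ Y t ω) (t : ℕ) :
    Measurable (Y t) := by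
  induction t with
  | zero => exact hY0
  | succ t ih =>
    have hstep : Measurable fun p : (Fin n → ℝ) × Fin M => A p.2 *ᵥ p.1 :=
      measurable_from_prod_countable_left fun s =>
        (show Continuous fun v : Fin n → ℝ => A s *ᵥ v from
          continuous_const.matrix_mulVec continuous_id).measurable
    exact (funext (hY t)).symm ▸ hstep.comp (ih.prodMk (hr t))

lemma exists_measure_exists_lt_lt {μ : Measure Ω} [IsFiniteMeasure μ] {E : ℕ → Ω → ℝ}
    (hE : ∀ t, Measurable (E t)) (hbdd : ∀ᵐ ω ∂μ, BddAbove (Set.range fun t => E t ω))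
    {p : ENNReal} (hp : 0 < p) : ∃ C : ℝ, μ {ω | ∃ t, C < E t ω} < p := by
  set B : ℕ → Set Ω := fun C => {ω | ∃ t, (C : ℝ) < E t ω}
  have hB (C : ℕ) : MeasurableSet (B C) := by
    simp only [B, Set.ofPred_exists]
    exact .iUnion fun t => measurableSet_lt measurable_const (hE t)
  have hanti : Antitone B := fun C C' hCC' ω ⟨t, ht⟩ =>
    ⟨t, lt_of_le_of_lt (by exact_mod_cast hCC') ht⟩
  have hnull : μ (⋂ C, B C) = 0 := by
    refine measure_mono_null (fun ω hω => ?_) (ae_iff.1 hbdd)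
    rintro ⟨b, hb⟩
    obtain ⟨t, ht⟩ := Set.mem_iInter.1 hω ⌈b⌉₊
    exact (ht.trans_le ((hb ⟨t, rfl⟩).trans (Nat.le_ceil b))).false
  have hlim := tendsto_measure_iInter_atTop (fun C => (hB C).nullMeasurableSet) hanti
    ⟨0, measure_ne_top μ _⟩
  rw [hnull] at hlim
  obtain ⟨C, hC⟩ := (hlim.eventually_lt_const hp).exists
  exact ⟨C, hC⟩

theorem exists_pos_forall_measure_lt (μ : Measure Ω) [IsFiniteMeasure μ]
    (hr : ∀ t, Measurable (r t)) (X : (Fin n → ℝ) → ℕ → Ω → Fin n → ℝ)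
    (hX0 : ∀ x₀ ω, X x₀ 0 ω = x₀) (hXs : ∀ x₀ t ω, X x₀ (t + 1) ω = A (r t ω) *ᵥ X x₀ t ω)
    (hconv : ∀ x₀, ∀ᵐ ω ∂μ, Tendsto (fun t => euclNorm n (X x₀ t ω)) atTop (𝓝 0))
    {ε' : ℝ} (hε' : 0 < ε') {p : ℝ} (hp : 0 < p) :
    ∃ δ, 0 < δ ∧ ∀ x₀, euclNorm n x₀ < δ →
      μ {ω | ∃ t, ε' < euclNorm n (X x₀ t ω)} < ENNReal.ofReal p := by
  set E : ℕ → Ω → ℝ := fun t ω => ∑ j, euclNorm n (X (Pi.single j 1) t ω)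
  have hE (t : ℕ) : Measurable (E t) :=
    Finset.measurable_sum _ fun j _ => (isVectorNorm_euclNorm n).continuous.measurable.comp
      (measurable_trajectory A hr (funext (hX0 _) ▸ measurable_const) (hXs _) t)
  have hEbdd : ∀ᵐ ω ∂μ, BddAbove (Set.range fun t => E t ω) := by
    filter_upwards [ae_all_iff.2 fun j => hconv (Pi.single j 1)] with ω hω
    exact (tendsto_finsetSum univ fun j _ => hω j).bddAbove_range
  obtain ⟨C, hC⟩ := exists_measure_exists_lt_lt hE hEbdd (ENNReal.ofReal_pos.2 hp)
  have hC' : 0 < max C 1 := lt_max_of_lt_right one_pos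
  refine ⟨ε' / max C 1, by positivity, fun x₀ hx₀ => (measure_mono ?_).trans_lt hC⟩
  rintro ω ⟨t, ht⟩
  simp only [Set.mem_ofPred_eq]
  by_contra! hle
  have hX : euclNorm n (X x₀ t ω) ≤ ‖x₀‖ * E t ω := by
    rw [trajectory_eq_sum_smul A (fun x₀ t => X x₀ t ω) (hX0 · ω) (hXs · · ω)]
    exact (isVectorNorm_euclNorm n).sum_smul_le_norm_mul _ _
  have hsmall : ‖x₀‖ * E t ω < ε' :=
    calc ‖x₀‖ * E t ω ≤ ‖x₀‖ * max C 1 :=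
          mul_le_mul_of_nonneg_left ((hle t).trans (le_max_left _ _)) (norm_nonneg _)
      _ < ε' / max C 1 * max C 1 :=
          mul_lt_mul_of_pos_right ((norm_le_euclNorm n x₀).trans_lt hx₀) hC'
      _ = ε' := div_mul_cancel₀ _ hC'.ne'
  linarith

end Solutions

theorem stmt_1_general {Ω : Type*} [MeasurableSpace Ω] (μ : Measure Ω) [IsProbabilityMeasure μ]
    (M h n : ℕ) (hh : 1 ≤ h)
    (A : Fin M → Matrix (Fin n) (Fin n) ℝ)
    (r : ℕ → Ω → Fin M) (hmeas : ∀ t, Measurable (r t))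
    -- the solution process of the switched system `x(t+1) = A_{r(t)} x(t)`,
    -- as a function of the initial state
    (X : (Fin n → ℝ) → ℕ → Ω → (Fin n → ℝ))
    (hX0 : ∀ x₀ ω, X x₀ 0 ω = x₀)
    (hXs : ∀ x₀ t ω, X x₀ (t + 1) ω = (A (r t ω)).mulVec (X x₀ t ω))
    -- (i): long-run activity bounds
    (ρlo ρhi : Fin M → ℝ)
    (hbounds : ∀ᵐ ω ∂μ, ∀ s : Fin M,
      ρlo s ≤ liminf (fun k : ℕ =>
        (1 / (k : ℝ)) * ∑ t ∈ Finset.range k, (if r t ω = s then (1 : ℝ) else 0)) atTop ∧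
      limsup (fun k : ℕ =>
        (1 / (k : ℝ)) * ∑ t ∈ Finset.range k, (if r t ω = s then (1 : ℝ) else 0)) atTop
        ≤ ρhi s)
    -- (ii): existence of the limits for the lifted process
    (hlim : ∀ q : Fin h → Fin M, ∃ L : Ω → ℝ, ∀ᵐ ω ∂μ,
      Tendsto (fun k : ℕ => (1 / (k : ℝ)) * ∑ i ∈ Finset.range k,
          (if (fun j : Fin h => r (i * h + (j : ℕ)) ω) = q then (1 : ℝ) else 0))
        atTop (𝓝 (L ω)))
    -- (iii): a vector norm, its induced matrix norm, and ε ∈ (0,1)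
    (μnorm : (Fin n → ℝ) → ℝ)
    (hμnonneg : ∀ x, 0 ≤ μnorm x)
    (hμzero : ∀ x, μnorm x = 0 ↔ x = 0)
    (hμsmul : ∀ (c : ℝ) x, μnorm (c • x) = |c| * μnorm x)
    (hμadd : ∀ x y, μnorm (x + y) ≤ μnorm x + μnorm y)
    (ν : Matrix (Fin n) (Fin n) ℝ → ℝ)
    (hν : ∀ N : Matrix (Fin n) (Fin n) ℝ,
      ν N = ⨆ x : {x : Fin n → ℝ // x ≠ 0},
        μnorm (N.mulVec (x : Fin n → ℝ)) / μnorm (x : Fin n → ℝ))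
    (ε : ℝ)
    -- the LP stability condition: the objective is negative on the whole feasible set
    (hLP : ∀ ρ : (Fin h → Fin M) → ℝ,
      (∀ q, ρ q ∈ Set.Icc (0 : ℝ) 1) →
      (∑ q : Fin h → Fin M, ρ q = 1) →
      (∀ s : Fin M,
        ρlo s ≤ (∑ q : Fin h → Fin M, ((modeCount M h s q : ℝ) / (h : ℝ)) * ρ q) ∧
        (∑ q : Fin h → Fin M, ((modeCount M h s q : ℝ) / (h : ℝ)) * ρ q) ≤ ρhi s) →
      (∑ q : Fin h → Fin M,
        (if Gamma M h n A q = 0 then Real.log ε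
          else Real.log (ν (Gamma M h n A q))) * ρ q) < 0) :
    -- (a) almost sure stability
    (∀ ε' : ℝ, 0 < ε' → ∀ p : ℝ, 0 < p → ∃ δ : ℝ, 0 < δ ∧
      ∀ x₀ : Fin n → ℝ, euclNorm n x₀ < δ →
        μ {ω | ∃ t : ℕ, ε' < euclNorm n (X x₀ t ω)} < ENNReal.ofReal p) ∧
    -- (b) almost sure convergence to zero
    (∀ x₀ : Fin n → ℝ, ∀ᵐ ω ∂μ,
      Tendsto (fun t : ℕ => euclNorm n (X x₀ t ω)) atTop (𝓝 0)) := by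
  have hμn : IsVectorNorm μnorm := ⟨hμnonneg, hμzero, hμsmul, hμadd⟩
  obtain rfl : ν = inducedNorm μnorm := funext hν
  have hconv (x₀ : Fin n → ℝ) :
      ∀ᵐ ω ∂μ, Tendsto (fun t => euclNorm n (X x₀ t ω)) atTop (𝓝 0) := by
    choose L hL using hlim
    filter_upwards [hbounds, ae_all_iff.2 hL] with ω hb hLω
    have hmode := liminf_le_sum_and_sum_le_limsup hh (σ := fun t => r t ω) hLω
    have hneg : ∑ q, logGain (inducedNorm μnorm) ε (Gamma M h n A q) * L q ω < 0 :=
      hLP (fun q => L q ω) (fun q => mem_Icc_of_tendsto_empiricalFreq (hLω q))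
        (sum_eq_one_of_tendsto_empiricalFreq hLω)
        fun s => ⟨(hb s).1.trans (hmode s).1, (hmode s).2.trans (hb s).2⟩
    have hμconv := tendsto_trajectory_zero (x := (X x₀ · ω)) (hXs x₀ · ω) hh hμn.nonneg
      (hμn.map_mulVec_le_exp_logGain ε) hLω hneg
    obtain ⟨K, hK⟩ := hμn.exists_le_mul (isVectorNorm_euclNorm n)
    exact squeeze_zero (fun _ => (isVectorNorm_euclNorm n).nonneg _) (fun _ => hK _)
      (by simpa using hμconv.const_mul K)
  exact ⟨fun ε' hε' p hp => exists_pos_forall_measure_lt A μ hmeas X hX0 hXs hconv hε' hp, hconv⟩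

/-- **Theorem 1 of the paper** (almost sure asymptotic stability of the stochastic
switched system `x(t+1) = A_{r(t)} x(t)`).  Assume: (i) the long-run mode-activity
averages of the mode signal `r` are a.s. bounded by `ρ̲ₛ` and `ρ̄ₛ`; (ii) for every
`q ∈ (Fin M)^h` the averages `(1/k)·Σ_{i<k} 1[r̄(i)=q]` converge almost surely;
(iii) there are a vector norm `μnorm` with induced matrix norm `ν` and `ε ∈ (0,1)`
such that `Σ_q γ_q·ρ_q < 0` for every `ρ` in the LP1 feasible set, where
`γ_q = ln ν(Γ_q)` if `Γ_q ≠ 0` and `γ_q = ln ε` otherwise.  Then the zero solution is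
(a) almost surely stable and (b) its state converges to `0` almost surely. -/
theorem stmt_1 {Ω : Type*} [MeasurableSpace Ω] (μ : Measure Ω) [IsProbabilityMeasure μ]
    (M h n : ℕ) (hM : 1 ≤ M) (hh : 1 ≤ h) (hn : 1 ≤ n)
    (A : Fin M → Matrix (Fin n) (Fin n) ℝ)
    (r : ℕ → Ω → Fin M) (hmeas : ∀ t, Measurable (r t))
    -- the solution process of the switched system `x(t+1) = A_{r(t)} x(t)`,
    -- as a function of the initial state
    (X : (Fin n → ℝ) → ℕ → Ω → (Fin n → ℝ))
    (hX0 : ∀ x₀ ω, X x₀ 0 ω = x₀)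
    (hXs : ∀ x₀ t ω, X x₀ (t + 1) ω = (A (r t ω)).mulVec (X x₀ t ω))
    -- (i): long-run activity bounds
    (ρlo ρhi : Fin M → ℝ)
    (hlo01 : ∀ s, ρlo s ∈ Set.Icc (0 : ℝ) 1) (hhi01 : ∀ s, ρhi s ∈ Set.Icc (0 : ℝ) 1)
    (hbounds : ∀ᵐ ω ∂μ, ∀ s : Fin M,
      ρlo s ≤ liminf (fun k : ℕ =>
        (1 / (k : ℝ)) * ∑ t ∈ Finset.range k, (if r t ω = s then (1 : ℝ) else 0)) atTop ∧
      limsup (fun k : ℕ =>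
        (1 / (k : ℝ)) * ∑ t ∈ Finset.range k, (if r t ω = s then (1 : ℝ) else 0)) atTop
        ≤ ρhi s)
    -- (ii): existence of the limits for the lifted process
    (hlim : ∀ q : Fin h → Fin M, ∃ L : Ω → ℝ, ∀ᵐ ω ∂μ,
      Tendsto (fun k : ℕ => (1 / (k : ℝ)) * ∑ i ∈ Finset.range k,
          (if (fun j : Fin h => r (i * h + (j : ℕ)) ω) = q then (1 : ℝ) else 0))
        atTop (𝓝 (L ω)))
    -- (iii): a vector norm, its induced matrix norm, and ε ∈ (0,1)
    (μnorm : (Fin n → ℝ) → ℝ)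
    (hμnonneg : ∀ x, 0 ≤ μnorm x)
    (hμzero : ∀ x, μnorm x = 0 ↔ x = 0)
    (hμsmul : ∀ (c : ℝ) x, μnorm (c • x) = |c| * μnorm x)
    (hμadd : ∀ x y, μnorm (x + y) ≤ μnorm x + μnorm y)
    (ν : Matrix (Fin n) (Fin n) ℝ → ℝ)
    (hν : ∀ N : Matrix (Fin n) (Fin n) ℝ,
      ν N = ⨆ x : {x : Fin n → ℝ // x ≠ 0},
        μnorm (N.mulVec (x : Fin n → ℝ)) / μnorm (x : Fin n → ℝ))
    (ε : ℝ) (hε : ε ∈ Set.Ioo (0 : ℝ) 1)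
    -- the LP stability condition: the objective is negative on the whole feasible set
    (hLP : ∀ ρ : (Fin h → Fin M) → ℝ,
      (∀ q, ρ q ∈ Set.Icc (0 : ℝ) 1) →
      (∑ q : Fin h → Fin M, ρ q = 1) →
      (∀ s : Fin M,
        ρlo s ≤ (∑ q : Fin h → Fin M, ((modeCount M h s q : ℝ) / (h : ℝ)) * ρ q) ∧
        (∑ q : Fin h → Fin M, ((modeCount M h s q : ℝ) / (h : ℝ)) * ρ q) ≤ ρhi s) →
      (∑ q : Fin h → Fin M,
        (if Gamma M h n A q = 0 then Real.log ε
          else Real.log (ν (Gamma M h n A q))) * ρ q) < 0) :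
    -- (a) almost sure stability
    (∀ ε' : ℝ, 0 < ε' → ∀ p : ℝ, 0 < p → ∃ δ : ℝ, 0 < δ ∧
      ∀ x₀ : Fin n → ℝ, euclNorm n x₀ < δ →
        μ {ω | ∃ t : ℕ, ε' < euclNorm n (X x₀ t ω)} < ENNReal.ofReal p) ∧
    -- (b) almost sure convergence to zero
    (∀ x₀ : Fin n → ℝ, ∀ᵐ ω ∂μ,
      Tendsto (fun t : ℕ => euclNorm n (X x₀ t ω)) atTop (𝓝 0)) :=
  stmt_1_general μ M h n hh A r hmeas X hX0 hXs ρlo ρhi hbounds hlim μnorm hμnonneg hμzero hμsmul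
    hμadd ν hν ε hLP
end
end

section
/- Let M ≥ 1 and h ≥ 1 be integers, let ρ̲ₛ, ρ̄ₛ ∈ [0,1] satisfy ρ̲ₛ ≤ ρ̄ₛ for every mode s and Σ_{s ∈ Fin M} ρ̲ₛ ≤ 1 ≤ Σ_{s ∈ Fin M} ρ̄ₛ, and let γ : (Fin M)^h → ℝ be arbitrary coefficients with γ'_z = max_{q ∈ 𝓜^{h,z}} γ_q for z ∈ Z_h. Then the optimal values of the two linear programs coincide: sup { Σ_{q ∈ (Fin M)^h} γ_q · ρ_q : ρ ∈ F_h } = sup { Σ_{z ∈ Z_h} γ'_z · ρ'_z : ρ' ∈ F'_h }. -/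
noncomputable section

/-- The LP1 feasible set `F_h`. -/
def FeasLP1 (M h : ℕ) (ρlo ρhi : Fin M → ℝ) (ρ : (Fin h → Fin M) → ℝ) : Prop :=
  (∀ q, ρ q ∈ Set.Icc (0 : ℝ) 1) ∧ (∑ q : Fin h → Fin M, ρ q = 1) ∧
  ∀ s : Fin M,
    ρlo s ≤ (∑ q : Fin h → Fin M, ((modeCount M h s q : ℝ) / (h : ℝ)) * ρ q) ∧
    (∑ q : Fin h → Fin M, ((modeCount M h s q : ℝ) / (h : ℝ)) * ρ q) ≤ ρhi s

/-- `Z_h`: the finite set of `M`-tuples `z` of nonnegative integers with `Σ_s z_s = h`. -/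
def Zset (M h : ℕ) : Finset (Fin M → ℕ) := Finset.Nat.antidiagonalTuple M h

/-- The LP2 feasible set `F'_h`. -/
def FeasLP2 (M h : ℕ) (ρlo ρhi : Fin M → ℝ) (ρ' : (Fin M → ℕ) → ℝ) : Prop :=
  (∀ z ∈ Zset M h, ρ' z ∈ Set.Icc (0 : ℝ) 1) ∧ (∑ z ∈ Zset M h, ρ' z = 1) ∧
  ∀ s : Fin M,
    ρlo s ≤ (∑ z ∈ Zset M h, ((z s : ℝ) / (h : ℝ)) * ρ' z) ∧
    (∑ z ∈ Zset M h, ((z s : ℝ) / (h : ℝ)) * ρ' z) ≤ ρhi s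

/-- `γ'_z = max_{q ∈ 𝓜^{h,z}} γ_q`, where `𝓜^{h,z} = {q : c_s(q) = z_s for all s}`. -/
def gammaMax (M h : ℕ) (γ : (Fin h → Fin M) → ℝ) (z : Fin M → ℕ) : ℝ :=
  sSup (γ '' {q : Fin h → Fin M | ∀ s : Fin M, modeCount M h s q = z s})

/-! ### Auxiliary lemmas -/

theorem aux_sum_ite_countP {α : Type*} (p : α → Bool) (l : List α) :
    (l.map (fun a => if p a then 1 else 0)).sum = l.countP p := by
  induction l with
  | nil => simp
  | cons a l ih => by_cases hp : p a <;> simp [List.countP_cons, hp, ih, Nat.add_comm]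

theorem aux_card_filter_eq_count (M : ℕ) (L : List (Fin M)) (s : Fin M) :
    (Finset.univ.filter fun j : Fin L.length => L.get j = s).card = L.count s := by
  classical
  conv_rhs => rw [← List.map_get_finRange L]
  rw [List.count, List.countP_map]
  rw [Finset.card_filter, Fin.sum_univ_def]
  rw [← aux_sum_ite_countP]
  simp [Function.comp]

/-- For every `z` with `∑ s, z s = h` there is a sequence with those mode counts. -/
theorem exists_mode_seq (M h : ℕ) (z : Fin M → ℕ) (hz : ∑ s, z s = h) :
    ∃ q : Fin h → Fin M, ∀ s, modeCount M h s q = z s := by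
  classical
  set L : List (Fin M) := (List.finRange M).flatMap (fun s => List.replicate (z s) s) with hL
  have hcount : ∀ s, L.count s = z s := by
    intro s
    rw [hL, List.count_flatMap]
    have : ∀ t : Fin M, List.count s (List.replicate (z t) t)
        = if s = t then z t else 0 := by
      intro t; rw [List.count_replicate]
      by_cases hts : t = s
      · subst hts; simp
      · simp [hts, Ne.symm hts]
    simp only [Function.comp_def, this]
    rw [← Fin.sum_univ_def, Finset.sum_ite_eq]
    simp
  have hlen : L.length = h := by
    simp [hL, List.length_flatMap, Function.comp, ← Fin.sum_univ_def, hz]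
  subst hlen
  exact ⟨L.get, fun s => (aux_card_filter_eq_count M L s).trans (hcount s)⟩

/-- The counting map sends every sequence into `Zset`. -/
theorem cnt_mem_Zset (M h : ℕ) (q : Fin h → Fin M) :
    (fun s => modeCount M h s q) ∈ Zset M h := by
  classical
  rw [Zset, Finset.Nat.mem_antidiagonalTuple]
  have := Finset.card_eq_sum_card_fiberwise
    (f := q) (s := (Finset.univ : Finset (Fin h))) (t := Finset.univ)
    (fun x _ => Finset.mem_univ _)
  simpa [modeCount, Finset.card_univ] using this.symm

theorem gammaMax_attained (M h : ℕ) (γ : (Fin h → Fin M) → ℝ) (z : Fin M → ℕ)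
    (hz : z ∈ Zset M h) :
    ∃ q : Fin h → Fin M, (∀ s, modeCount M h s q = z s) ∧ γ q = gammaMax M h γ z := by
  have hzsum : ∑ s, z s = h := (Finset.Nat.mem_antidiagonalTuple).mp hz
  obtain ⟨q0, hq0⟩ := exists_mode_seq M h z hzsum
  have hne : (γ '' {q : Fin h → Fin M | ∀ s, modeCount M h s q = z s}).Nonempty :=
    ⟨γ q0, q0, hq0, rfl⟩
  have hfin : (γ '' {q : Fin h → Fin M | ∀ s, modeCount M h s q = z s}).Finite :=
    (Set.toFinite _).image γ
  obtain ⟨q, hq, hγq⟩ := hne.csSup_mem hfin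
  exact ⟨q, hq, hγq⟩

theorem le_gammaMax (M h : ℕ) (γ : (Fin h → Fin M) → ℝ) (q : Fin h → Fin M) :
    γ q ≤ gammaMax M h γ (fun s => modeCount M h s q) := by
  have hfin : (γ '' {p : Fin h → Fin M | ∀ s, modeCount M h s p = modeCount M h s q}).Finite :=
    (Set.toFinite _).image γ
  exact le_csSup hfin.bddAbove ⟨q, fun s => rfl, rfl⟩

/-- **Lemma 4 of the paper (`J_h = J'_h`).**  Under the standing assumptions on the
bounds `ρ̲, ρ̄`, the optimal values of the two linear programs coincide:
`sup {Σ_q γ_q·ρ_q : ρ ∈ F_h} = sup {Σ_z γ'_z·ρ'_z : ρ' ∈ F'_h}`. -/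
theorem stmt_5 (M h : ℕ) (hM : 1 ≤ M) (hh : 1 ≤ h)
    (ρlo ρhi : Fin M → ℝ)
    (hlo01 : ∀ s, ρlo s ∈ Set.Icc (0 : ℝ) 1) (hhi01 : ∀ s, ρhi s ∈ Set.Icc (0 : ℝ) 1)
    (hle : ∀ s, ρlo s ≤ ρhi s)
    (hsumlo : (∑ s : Fin M, ρlo s) ≤ 1) (hsumhi : (1 : ℝ) ≤ ∑ s : Fin M, ρhi s)
    (γ : (Fin h → Fin M) → ℝ) :
    sSup {v : ℝ | ∃ ρ : (Fin h → Fin M) → ℝ, FeasLP1 M h ρlo ρhi ρ ∧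
        v = ∑ q : Fin h → Fin M, γ q * ρ q}
      = sSup {v : ℝ | ∃ ρ' : (Fin M → ℕ) → ℝ, FeasLP2 M h ρlo ρhi ρ' ∧
        v = ∑ z ∈ Zset M h, gammaMax M h γ z * ρ' z} := by
  classical
  set A := {v : ℝ | ∃ ρ : (Fin h → Fin M) → ℝ, FeasLP1 M h ρlo ρhi ρ ∧
      v = ∑ q : Fin h → Fin M, γ q * ρ q} with hA
  set B := {v : ℝ | ∃ ρ' : (Fin M → ℕ) → ℝ, FeasLP2 M h ρlo ρhi ρ' ∧
      v = ∑ z ∈ Zset M h, gammaMax M h γ z * ρ' z} with hB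
  -- A is bounded above
  have bddA : BddAbove A := by
    refine ⟨∑ q : Fin h → Fin M, |γ q|, fun v hv => ?_⟩
    obtain ⟨ρ, ⟨h01, _, _⟩, rfl⟩ := hv
    refine Finset.sum_le_sum fun q _ => ?_
    have h0 := (h01 q).1
    have h1 := (h01 q).2
    calc γ q * ρ q ≤ |γ q| * ρ q := by
          exact mul_le_mul_of_nonneg_right (le_abs_self _) h0
      _ ≤ |γ q| * 1 := by
          exact mul_le_mul_of_nonneg_left h1 (abs_nonneg _)
      _ = |γ q| := mul_one _
  -- B ⊆ A
  have hBA : B ⊆ A := by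
    rintro v ⟨ρ', ⟨h01, hsum, hcon⟩, rfl⟩
    -- pick a maximizer in each fiber
    have hMne : Nonempty (Fin M) := ⟨⟨0, hM⟩⟩
    have pick : ∀ z : Fin M → ℕ, z ∈ Zset M h →
        ∃ q : Fin h → Fin M, (∀ s, modeCount M h s q = z s) ∧ γ q = gammaMax M h γ z :=
      fun z hz => gammaMax_attained M h γ z hz
    choose! p hp1 hp2 using pick
    set ρ : (Fin h → Fin M) → ℝ :=
      fun q => ∑ z ∈ (Zset M h).filter (fun z => p z = q), ρ' z with hρ
    have hnonneg : ∀ z ∈ Zset M h, 0 ≤ ρ' z := fun z hz => (h01 z hz).1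
    -- transfer identity
    have T : ∀ g : (Fin h → Fin M) → ℝ,
        ∑ q : Fin h → Fin M, g q * ρ q = ∑ z ∈ Zset M h, g (p z) * ρ' z := by
      intro g
      have : ∀ q : Fin h → Fin M, g q * ρ q
          = ∑ z ∈ (Zset M h).filter (fun z => p z = q), g (p z) * ρ' z := by
        intro q
        rw [hρ, Finset.mul_sum]
        refine Finset.sum_congr rfl fun z hz => ?_
        rw [(Finset.mem_filter.mp hz).2]
      rw [Finset.sum_congr rfl fun q _ => this q]
      exact Finset.sum_fiberwise_of_maps_to (fun z _ => Finset.mem_univ (p z)) _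
    have Tsum : ∑ q : Fin h → Fin M, ρ q = ∑ z ∈ Zset M h, ρ' z := by
      have := T (fun _ => 1)
      simpa using this
    refine ⟨ρ, ⟨?_, ?_, ?_⟩, ?_⟩
    · intro q
      constructor
      · exact Finset.sum_nonneg fun z hz => hnonneg z (Finset.mem_filter.mp hz).1
      · calc ρ q ≤ ∑ z ∈ Zset M h, ρ' z :=
              Finset.sum_le_sum_of_subset_of_nonneg (Finset.filter_subset _ _)
                (fun z hz _ => hnonneg z hz)
          _ = 1 := hsum
    · rw [Tsum, hsum]
    · intro s
      have hTs : ∑ q : Fin h → Fin M, ((modeCount M h s q : ℝ) / (h : ℝ)) * ρ q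
          = ∑ z ∈ Zset M h, ((z s : ℝ) / (h : ℝ)) * ρ' z := by
        rw [T (fun q => (modeCount M h s q : ℝ) / (h : ℝ))]
        exact Finset.sum_congr rfl fun z hz => by rw [hp1 z hz s]
      rw [hTs]
      exact hcon s
    · rw [T γ]
      exact (Finset.sum_congr rfl fun z hz => by rw [hp2 z hz]).symm
  -- every element of A is dominated by an element of B
  have hdom : ∀ v ∈ A, ∃ w ∈ B, v ≤ w := by
    rintro v ⟨ρ, ⟨h01, hsum, hcon⟩, rfl⟩
    set cnt : (Fin h → Fin M) → (Fin M → ℕ) := fun q s => modeCount M h s q with hcnt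
    set ρ' : (Fin M → ℕ) → ℝ :=
      fun z => ∑ q ∈ Finset.univ.filter (fun q : Fin h → Fin M => cnt q = z), ρ q with hρ'
    have hnn : ∀ q : Fin h → Fin M, 0 ≤ ρ q := fun q => (h01 q).1
    have T' : ∀ g : (Fin M → ℕ) → ℝ,
        ∑ z ∈ Zset M h, g z * ρ' z = ∑ q : Fin h → Fin M, g (cnt q) * ρ q := by
      intro g
      have : ∀ z ∈ Zset M h, g z * ρ' z
          = ∑ q ∈ Finset.univ.filter (fun q : Fin h → Fin M => cnt q = z), g (cnt q) * ρ q := by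
        intro z _
        rw [hρ', Finset.mul_sum]
        refine Finset.sum_congr rfl fun q hq => ?_
        rw [(Finset.mem_filter.mp hq).2]
      rw [Finset.sum_congr rfl this]
      exact Finset.sum_fiberwise_of_maps_to (fun q _ => cnt_mem_Zset M h q) _
    have T'sum : ∑ z ∈ Zset M h, ρ' z = ∑ q : Fin h → Fin M, ρ q := by
      have := T' (fun _ => 1)
      simpa using this
    refine ⟨∑ z ∈ Zset M h, gammaMax M h γ z * ρ' z, ⟨ρ', ⟨?_, ?_, ?_⟩, rfl⟩, ?_⟩
    · intro z _
      constructor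
      · exact Finset.sum_nonneg fun q _ => hnn q
      · calc ρ' z ≤ ∑ q : Fin h → Fin M, ρ q :=
              Finset.sum_le_sum_of_subset_of_nonneg (Finset.filter_subset _ _)
                (fun q _ _ => hnn q)
          _ = 1 := hsum
    · rw [T'sum, hsum]
    · intro s
      have hTs : ∑ z ∈ Zset M h, ((z s : ℝ) / (h : ℝ)) * ρ' z
          = ∑ q : Fin h → Fin M, ((modeCount M h s q : ℝ) / (h : ℝ)) * ρ q := by
        rw [T' (fun z => (z s : ℝ) / (h : ℝ))]
      rw [hTs]
      exact hcon s
    · rw [T' (gammaMax M h γ)]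
      refine Finset.sum_le_sum fun q _ => ?_
      exact mul_le_mul_of_nonneg_right (le_gammaMax M h γ q) (hnn q)
  -- conclude
  by_cases hAne : A.Nonempty
  · obtain ⟨v0, hv0⟩ := hAne
    obtain ⟨w0, hw0, _⟩ := hdom v0 hv0
    apply le_antisymm
    · refine csSup_le ⟨v0, hv0⟩ fun v hv => ?_
      obtain ⟨w, hwB, hvw⟩ := hdom v hv
      exact hvw.trans (le_csSup (bddA.mono hBA) hwB)
    · exact csSup_le_csSup bddA ⟨w0, hw0⟩ hBA
  · have hAempty : A = ∅ := Set.not_nonempty_iff_eq_empty.mp hAne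
    have hBempty : B = ∅ := Set.eq_empty_of_subset_empty (hAempty ▸ hBA)
    rw [hAempty, hBempty]

end
end

section
/- Let n, m ≥ 1 be integers, A ∈ ℝ^{n×n}, B ∈ ℝ^{n×m}, K ∈ ℝ^{m×n}, and ρ ∈ [0,1]. Suppose there exist a symmetric positive-definite matrix P ∈ ℝ^{n×n} and scalars β ∈ (0,1), φ ∈ [1,∞) such that βP − (A+BK)ᵀP(A+BK) is positive semidefinite, φP − AᵀPA is positive semidefinite, and (1−ρ)·ln β + ρ·ln φ < 0. Define the induced matrix norm ‖N‖_P = sup_{x ≠ 0} √((Nx)ᵀP(Nx)) / √(xᵀPx), set ε = √β, γ₁ = ln ‖A+BK‖_P if A+BK ≠ 0 and γ₁ = ln ε otherwise, and γ₂ = ln ‖A‖_P if A ≠ 0 and γ₂ = ln ε otherwise. Then for all ρ₁, ρ₂ ∈ [0,1] with ρ₁ + ρ₂ = 1, 1−ρ ≤ ρ₁, and ρ₂ ≤ ρ, one has γ₁·ρ₁ + γ₂·ρ₂ < 0. -/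
/-!
A condition `c • P - Nᵀ P N ⪰ 0` says `(Nx)ᵀP(Nx) ≤ c · xᵀPx`, hence `‖N‖_P ≤ √c`. So
`γ₁ ≤ ½ ln β` and `γ₂ ≤ ½ ln φ` (in the degenerate cases too, as `ln √β < 0 ≤ ½ ln φ`).
Since `ln β < 0 ≤ ln φ`, moving weight from `ρ₁` down to `1 - ρ` and from `ρ₂` up to `ρ`
only increases `½ (ρ₁ ln β + ρ₂ ln φ)`, which therefore stays below
`½ ((1 - ρ) ln β + ρ ln φ) < 0`.
-/

open Matrix

noncomputable section

/-- The matrix norm induced by the vector norm `x ↦ √(xᵀPx)`: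
`‖N‖_P = sup_{x ≠ 0} √((Nx)ᵀP(Nx)) / √(xᵀPx)`. -/
def matNormP (n : ℕ) (P N : Matrix (Fin n) (Fin n) ℝ) : ℝ :=
  ⨆ x : {x : Fin n → ℝ // x ≠ 0},
    Real.sqrt (N.mulVec (x : Fin n → ℝ) ⬝ᵥ P.mulVec (N.mulVec (x : Fin n → ℝ))) /
      Real.sqrt ((x : Fin n → ℝ) ⬝ᵥ P.mulVec (x : Fin n → ℝ))

section matNormP

variable {n : ℕ} {P N : Matrix (Fin n) (Fin n) ℝ} {c : ℝ}

lemma dotProduct_transpose_mul_mul_mulVec (x : Fin n → ℝ) :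
    x ⬝ᵥ (Nᵀ * P * N) *ᵥ x = N *ᵥ x ⬝ᵥ P *ᵥ (N *ᵥ x) := by
  rw [← mulVec_mulVec, ← mulVec_mulVec, dotProduct_mulVec, vecMul_transpose]

lemma dotProduct_mulVec_le_of_posSemidef (h : (c • P - Nᵀ * P * N).PosSemidef)
    (x : Fin n → ℝ) : N *ᵥ x ⬝ᵥ P *ᵥ (N *ᵥ x) ≤ c * (x ⬝ᵥ P *ᵥ x) := by
  have hx := h.dotProduct_mulVec_nonneg x
  rw [star_trivial, sub_mulVec, dotProduct_sub, smul_mulVec, dotProduct_smul, smul_eq_mul,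
    dotProduct_transpose_mul_mul_mulVec] at hx
  linarith

lemma ratio_le_sqrt_of_posSemidef (hP : P.PosDef) (hc : 0 ≤ c)
    (h : (c • P - Nᵀ * P * N).PosSemidef) {x : Fin n → ℝ} (hx : x ≠ 0) :
    Real.sqrt (N *ᵥ x ⬝ᵥ P *ᵥ (N *ᵥ x)) / Real.sqrt (x ⬝ᵥ P *ᵥ x) ≤ Real.sqrt c := by
  have hpos : 0 < x ⬝ᵥ P *ᵥ x := star_trivial x ▸ hP.dotProduct_mulVec_pos hx
  rw [div_le_iff₀ (Real.sqrt_pos.2 hpos), ← Real.sqrt_mul hc]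
  exact Real.sqrt_le_sqrt (dotProduct_mulVec_le_of_posSemidef h x)

lemma matNormP_le_sqrt (hP : P.PosDef) (hc : 0 ≤ c) (h : (c • P - Nᵀ * P * N).PosSemidef) :
    matNormP n P N ≤ Real.sqrt c :=
  Real.iSup_le (fun x => ratio_le_sqrt_of_posSemidef hP hc h x.2) (Real.sqrt_nonneg c)

lemma matNormP_pos (hP : P.PosDef) (hN : N ≠ 0) (hc : 0 ≤ c)
    (h : (c • P - Nᵀ * P * N).PosSemidef) : 0 < matNormP n P N := by
  obtain ⟨x, hNx⟩ : ∃ x, N *ᵥ x ≠ 0 := by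
    by_contra! hzero
    exact hN (Matrix.toLin'.injective (LinearMap.ext fun x => by simpa using hzero x))
  have hx : x ≠ 0 := by
    rintro rfl
    exact hNx (mulVec_zero N)
  have hbdd : BddAbove (Set.range fun y : {y : Fin n → ℝ // y ≠ 0} =>
      Real.sqrt (N *ᵥ y ⬝ᵥ P *ᵥ (N *ᵥ y)) / Real.sqrt (y.1 ⬝ᵥ P *ᵥ y)) := by
    refine ⟨Real.sqrt c, ?_⟩
    rintro _ ⟨y, rfl⟩
    exact ratio_le_sqrt_of_posSemidef hP hc h y.2
  refine lt_of_lt_of_le ?_ (le_ciSup hbdd ⟨x, hx⟩)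
  exact div_pos (Real.sqrt_pos.2 (hP.dotProduct_mulVec_pos hNx))
    (Real.sqrt_pos.2 (hP.dotProduct_mulVec_pos hx))

lemma log_matNormP_le (hP : P.PosDef) (hN : N ≠ 0) (hc : 0 ≤ c)
    (h : (c • P - Nᵀ * P * N).PosSemidef) : Real.log (matNormP n P N) ≤ Real.log c / 2 := by
  rw [← Real.log_sqrt hc]
  exact Real.log_le_log (matNormP_pos hP hN hc h) (matNormP_le_sqrt hP hc h)

end matNormP

theorem stmt_8_general (n m : ℕ)
    (A : Matrix (Fin n) (Fin n) ℝ) (B : Matrix (Fin n) (Fin m) ℝ)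
    (K : Matrix (Fin m) (Fin n) ℝ)
    (ρ : ℝ)
    (P : Matrix (Fin n) (Fin n) ℝ) (hP : P.PosDef)
    (β φ : ℝ) (hβ : β ∈ Set.Ioo (0 : ℝ) 1) (hφ : φ ∈ Set.Ici (1 : ℝ))
    (h₁ : (β • P - (A + B * K)ᵀ * P * (A + B * K)).PosSemidef)
    (h₂ : (φ • P - Aᵀ * P * A).PosSemidef)
    (h₃ : (1 - ρ) * Real.log β + ρ * Real.log φ < 0) :
    ∀ ρ₁ ρ₂ : ℝ, ρ₁ ∈ Set.Icc (0 : ℝ) 1 → ρ₂ ∈ Set.Icc (0 : ℝ) 1 →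
      ρ₁ + ρ₂ = 1 → 1 - ρ ≤ ρ₁ → ρ₂ ≤ ρ →
      (if A + B * K = 0 then Real.log (Real.sqrt β)
        else Real.log (matNormP n P (A + B * K))) * ρ₁ +
      (if A = 0 then Real.log (Real.sqrt β)
        else Real.log (matNormP n P A)) * ρ₂ < 0 := by
  intro ρ₁ ρ₂ hρ₁ hρ₂ _ hlow hhigh
  have hlogβ : Real.log β < 0 := Real.log_neg hβ.1 hβ.2
  have hlogφ : 0 ≤ Real.log φ := Real.log_nonneg hφ
  have hγ₁ : (if A + B * K = 0 then Real.log (Real.sqrt β)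
      else Real.log (matNormP n P (A + B * K))) ≤ Real.log β / 2 := by
    split_ifs with hABK
    · exact (Real.log_sqrt hβ.1.le).le
    · exact log_matNormP_le hP hABK hβ.1.le h₁
  have hγ₂ : (if A = 0 then Real.log (Real.sqrt β)
      else Real.log (matNormP n P A)) ≤ Real.log φ / 2 := by
    split_ifs with hA
    · rw [Real.log_sqrt hβ.1.le]
      linarith
    · exact log_matNormP_le hP hA (zero_le_one.trans hφ) h₂
  calc _ ≤ Real.log β / 2 * ρ₁ + Real.log φ / 2 * ρ₂ :=
        add_le_add (mul_le_mul_of_nonneg_right hγ₁ hρ₁.1) (mul_le_mul_of_nonneg_right hγ₂ hρ₂.1)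
    _ ≤ ((1 - ρ) * Real.log β + ρ * Real.log φ) / 2 := by
        linarith [mul_le_mul_of_nonpos_left hlow hlogβ.le, mul_le_mul_of_nonneg_left hhigh hlogφ]
    _ < 0 := by linarith

/-- **Proposition in Section IV-A of the paper.**  If there exist a symmetric
positive-definite `P`, `β ∈ (0,1)`, `φ ∈ [1,∞)` with `βP − (A+BK)ᵀP(A+BK) ⪰ 0`,
`φP − AᵀPA ⪰ 0`, and `(1−ρ)·ln β + ρ·ln φ < 0`, then with `ε = √β`,
`γ₁ = ln ‖A+BK‖_P` (or `ln ε` if `A+BK = 0`) and `γ₂ = ln ‖A‖_P` (or `ln ε` if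
`A = 0`), one has `γ₁·ρ₁ + γ₂·ρ₂ < 0` for all `ρ₁, ρ₂ ∈ [0,1]` with `ρ₁ + ρ₂ = 1`,
`1−ρ ≤ ρ₁` and `ρ₂ ≤ ρ`. -/
theorem stmt_8 (n m : ℕ) (hn : 1 ≤ n) (hm : 1 ≤ m)
    (A : Matrix (Fin n) (Fin n) ℝ) (B : Matrix (Fin n) (Fin m) ℝ)
    (K : Matrix (Fin m) (Fin n) ℝ)
    (ρ : ℝ) (hρ : ρ ∈ Set.Icc (0 : ℝ) 1)
    (P : Matrix (Fin n) (Fin n) ℝ) (hP : P.PosDef)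
    (β φ : ℝ) (hβ : β ∈ Set.Ioo (0 : ℝ) 1) (hφ : φ ∈ Set.Ici (1 : ℝ))
    (h₁ : (β • P - (A + B * K)ᵀ * P * (A + B * K)).PosSemidef)
    (h₂ : (φ • P - Aᵀ * P * A).PosSemidef)
    (h₃ : (1 - ρ) * Real.log β + ρ * Real.log φ < 0) :
    ∀ ρ₁ ρ₂ : ℝ, ρ₁ ∈ Set.Icc (0 : ℝ) 1 → ρ₂ ∈ Set.Icc (0 : ℝ) 1 →
      ρ₁ + ρ₂ = 1 → 1 - ρ ≤ ρ₁ → ρ₂ ≤ ρ →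
      (if A + B * K = 0 then Real.log (Real.sqrt β)
        else Real.log (matNormP n P (A + B * K))) * ρ₁ +
      (if A = 0 then Real.log (Real.sqrt β)
        else Real.log (matNormP n P A)) * ρ₂ < 0 :=
  stmt_8_general n m A B K ρ P hP β φ hβ hφ h₁ h₂ h₃

end
end

section
/- Let (Ω, 𝓕, ℙ) be a probability space and let l_N, l_D : ℕ → Ω → {0,1} be stochastic processes. Suppose there are scalars σ_N, σ_D, ρ_N, ρ_D ∈ [0,1] such that almost surely, liminf_{k→∞} (1/k)·Σ_{t=0}^{k−1} l_N(t) ≥ σ_N, limsup_{k→∞} (1/k)·Σ_{t=0}^{k−1} l_N(t) ≤ ρ_N, liminf_{k→∞} (1/k)·Σ_{t=0}^{k−1} l_D(t) ≥ σ_D, and limsup_{k→∞} (1/k)·Σ_{t=0}^{k−1} l_D(t) ≤ ρ_D. Define the mode signal r : ℕ → Ω → {1,2,3} by r(t) = 1 if l_N(t) = 0, r(t) = 2 if l_N(t) = 1 and l_D(t) = 0, and r(t) = 3 if l_N(t) = 1 and l_D(t) = 1. Then almost surely, for each s ∈ {1,2,3}, liminf_{k→∞} (1/k)·Σ_{t=0}^{k−1}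 1[r(t)=s] ≥ ρ̲ₛ and limsup_{k→∞} (1/k)·Σ_{t=0}^{k−1} 1[r(t)=s] ≤ ρ̄ₛ, where ρ̲₁ = 1−ρ_N, ρ̄₁ = 1−σ_N, ρ̲₂ = max{0, σ_N−ρ_D}, ρ̄₂ = min{ρ_N, 1−σ_D}, ρ̲₃ = max{0, σ_N+σ_D−1}, and ρ̄₃ = min{ρ_N, ρ_D}. -/
open Filter MeasureTheory

namespace Stmt9Aux

noncomputable def avg (f : ℕ → ℝ) (k : ℕ) : ℝ := (1 / (k : ℝ)) * ∑ t ∈ Finset.range k, f t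

lemma avg_mem {f : ℕ → ℝ} (hf : ∀ t, f t ∈ Set.Icc (0:ℝ) 1) (k : ℕ) :
    avg f k ∈ Set.Icc (0:ℝ) 1 := by
  constructor
  · exact mul_nonneg (by positivity) (Finset.sum_nonneg fun t _ => (hf t).1)
  · rcases Nat.eq_zero_or_pos k with rfl | hk
    · simp [avg]
    · have h1 : ∑ t ∈ Finset.range k, f t ≤ (k : ℝ) := by
        calc ∑ t ∈ Finset.range k, f t ≤ ∑ t ∈ Finset.range k, (1:ℝ) :=
          Finset.sum_le_sum fun t _ => (hf t).2
        _ = (k : ℝ) := by simp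
      have hk' : (0:ℝ) < (k:ℝ) := by exact_mod_cast hk
      calc avg f k ≤ (1 / (k:ℝ)) * (k:ℝ) := by
            exact mul_le_mul_of_nonneg_left h1 (by positivity)
        _ = 1 := by field_simp
  
lemma avg_mono {f g : ℕ → ℝ} (h : ∀ t, f t ≤ g t) (k : ℕ) : avg f k ≤ avg g k :=
  mul_le_mul_of_nonneg_left (Finset.sum_le_sum fun t _ => h t) (by positivity)

lemma avg_add (f g : ℕ → ℝ) (k : ℕ) :
    avg (fun t => f t + g t) k = avg f k + avg g k := by
  simp [avg, Finset.sum_add_distrib, mul_add]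

lemma avg_one {k : ℕ} (hk : 1 ≤ k) : avg (fun _ => (1:ℝ)) k = 1 := by
  have hk' : (0:ℝ) < (k:ℝ) := by exact_mod_cast hk
  simp [avg]
  field_simp

lemma bdd_above {f : ℕ → ℝ} (hf : ∀ t, f t ∈ Set.Icc (0:ℝ) 1) :
    IsBoundedUnder (· ≤ ·) atTop (avg f) :=
  isBoundedUnder_of ⟨1, fun k => (avg_mem hf k).2⟩

lemma bdd_below {f : ℕ → ℝ} (hf : ∀ t, f t ∈ Set.Icc (0:ℝ) 1) :
    IsBoundedUnder (· ≥ ·) atTop (avg f) :=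
  isBoundedUnder_of ⟨0, fun k => (avg_mem hf k).1⟩

lemma prop2_aux (b d : ℕ → Bool) (σN σD ρN ρD : ℝ)
    (hN1 : σN ≤ liminf (fun k : ℕ =>
      (1 / (k : ℝ)) * ∑ t ∈ Finset.range k, (if b t then (1 : ℝ) else 0)) atTop)
    (hN2 : limsup (fun k : ℕ =>
      (1 / (k : ℝ)) * ∑ t ∈ Finset.range k, (if b t then (1 : ℝ) else 0)) atTop ≤ ρN)
    (hD1 : σD ≤ liminf (fun k : ℕ =>
      (1 / (k : ℝ)) * ∑ t ∈ Finset.range k, (if d t then (1 : ℝ) else 0)) atTop)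
    (hD2 : limsup (fun k : ℕ =>
      (1 / (k : ℝ)) * ∑ t ∈ Finset.range k, (if d t then (1 : ℝ) else 0)) atTop ≤ ρD)
    (r : ℕ → ℕ) (hr : ∀ t, r t = if b t = false then 1 else if d t = false then 2 else 3) :
    ((1 - ρN ≤ liminf (fun k : ℕ =>
        (1 / (k : ℝ)) * ∑ t ∈ Finset.range k, (if r t = 1 then (1 : ℝ) else 0)) atTop ∧
      limsup (fun k : ℕ =>
        (1 / (k : ℝ)) * ∑ t ∈ Finset.range k, (if r t = 1 then (1 : ℝ) else 0)) atTop
        ≤ 1 - σN) ∧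
    (max 0 (σN - ρD) ≤ liminf (fun k : ℕ =>
        (1 / (k : ℝ)) * ∑ t ∈ Finset.range k, (if r t = 2 then (1 : ℝ) else 0)) atTop ∧
      limsup (fun k : ℕ =>
        (1 / (k : ℝ)) * ∑ t ∈ Finset.range k, (if r t = 2 then (1 : ℝ) else 0)) atTop
        ≤ min ρN (1 - σD)) ∧
    (max 0 (σN + σD - 1) ≤ liminf (fun k : ℕ =>
        (1 / (k : ℝ)) * ∑ t ∈ Finset.range k, (if r t = 3 then (1 : ℝ) else 0)) atTop ∧
      limsup (fun k : ℕ =>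
        (1 / (k : ℝ)) * ∑ t ∈ Finset.range k, (if r t = 3 then (1 : ℝ) else 0)) atTop
        ≤ min ρN ρD)) := by
  set IN : ℕ → ℝ := fun t => if b t then 1 else 0 with hIN
  set ID : ℕ → ℝ := fun t => if d t then 1 else 0 with hID
  set I1 : ℕ → ℝ := fun t => if r t = 1 then 1 else 0 with hI1
  set I2 : ℕ → ℝ := fun t => if r t = 2 then 1 else 0 with hI2
  set I3 : ℕ → ℝ := fun t => if r t = 3 then 1 else 0 with hI3
  -- pointwise facts
  have memIN : ∀ t, IN t ∈ Set.Icc (0:ℝ) 1 := fun t => by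
    by_cases h : b t <;> simp [hIN, h]
  have memID : ∀ t, ID t ∈ Set.Icc (0:ℝ) 1 := fun t => by
    by_cases h : d t <;> simp [hID, h]
  have memI1 : ∀ t, I1 t ∈ Set.Icc (0:ℝ) 1 := fun t => by
    by_cases h : r t = 1 <;> simp [hI1, h]
  have memI2 : ∀ t, I2 t ∈ Set.Icc (0:ℝ) 1 := fun t => by
    by_cases h : r t = 2 <;> simp [hI2, h]
  have memI3 : ∀ t, I3 t ∈ Set.Icc (0:ℝ) 1 := fun t => by
    by_cases h : r t = 3 <;> simp [hI3, h]
  have pw1 : ∀ t, I1 t + IN t = 1 := fun t => by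
    cases hb : b t <;> cases hd : d t <;> simp [hI1, hIN, hr, hb, hd]
  have pw23 : ∀ t, I2 t + I3 t = IN t := fun t => by
    cases hb : b t <;> cases hd : d t <;> simp [hI2, hI3, hIN, hr, hb, hd]
  have pw3D : ∀ t, I3 t ≤ ID t := fun t => by
    cases hb : b t <;> cases hd : d t <;> simp [hI3, hID, hr, hb, hd]
  have pw3N : ∀ t, I3 t ≤ IN t := fun t => by
    cases hb : b t <;> cases hd : d t <;> simp [hI3, hIN, hr, hb, hd]
  have pw2N : ∀ t, I2 t ≤ IN t := fun t => by
    cases hb : b t <;> cases hd : d t <;> simp [hI2, hIN, hr, hb, hd]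
  have pw2D : ∀ t, I2 t + ID t ≤ 1 := fun t => by
    cases hb : b t <;> cases hd : d t <;> simp [hI2, hID, hr, hb, hd]
  have pw3low : ∀ t, IN t + ID t ≤ I3 t + 1 := fun t => by
    cases hb : b t <;> cases hd : d t <;> simp [hI3, hIN, hID, hr, hb, hd]
  have pw2low : ∀ t, IN t ≤ I2 t + ID t := fun t => by
    cases hb : b t <;> cases hd : d t <;> simp [hI2, hIN, hID, hr, hb, hd]
  -- averages
  have hAN1 : σN ≤ liminf (avg IN) atTop := hN1
  have hAN2 : limsup (avg IN) atTop ≤ ρN := hN2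
  have hAD1 : σD ≤ liminf (avg ID) atTop := hD1
  have hAD2 : limsup (avg ID) atTop ≤ ρD := hD2
  have bNu := bdd_above memIN
  have bNl := bdd_below memIN
  have bDu := bdd_above memID
  have bDl := bdd_below memID
  have b1u := bdd_above memI1
  have b1l := bdd_below memI1
  have b2u := bdd_above memI2
  have b2l := bdd_below memI2
  have b3u := bdd_above memI3
  have b3l := bdd_below memI3
  -- goal as avg statements
  show ((1 - ρN ≤ liminf (avg I1) atTop ∧ limsup (avg I1) atTop ≤ 1 - σN) ∧
    (max 0 (σN - ρD) ≤ liminf (avg I2) atTop ∧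
      limsup (avg I2) atTop ≤ min ρN (1 - σD)) ∧
    (max 0 (σN + σD - 1) ≤ liminf (avg I3) atTop ∧
      limsup (avg I3) atTop ≤ min ρN ρD))
  -- Mode 1
  have hEq1 : (avg I1) =ᶠ[atTop] fun k => 1 - avg IN k := by
    filter_upwards [eventually_ge_atTop 1] with k hk
    have : avg I1 k + avg IN k = 1 := by
      rw [← avg_add]
      rw [show (fun t => I1 t + IN t) = fun _ => (1:ℝ) from funext pw1]
      exact avg_one hk
    linarith
  have m1 : 1 - ρN ≤ liminf (avg I1) atTop ∧ limsup (avg I1) atTop ≤ 1 - σN := by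
    constructor
    · rw [liminf_congr hEq1, liminf_const_sub atTop (avg IN) 1 bNu bNl.isCoboundedUnder_le]
      linarith
    · rw [limsup_congr hEq1, limsup_const_sub atTop (avg IN) 1 bNu.isCoboundedUnder_ge bNl]
      linarith
  refine ⟨m1, ⟨?_, ?_⟩, ⟨?_, ?_⟩⟩
  -- Mode 2 lower
  · have hv_mem : ∀ k, avg IN k - avg ID k ∈ Set.Icc (-1:ℝ) 1 := fun k => by
      have h1 := avg_mem memIN k
      have h2 := avg_mem memID k
      constructor <;> [linarith [h1.1, h2.2]; linarith [h1.2, h2.1]]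
    have hvbl : IsBoundedUnder (· ≥ ·) atTop (fun k => avg IN k - avg ID k) :=
      isBoundedUnder_of ⟨-1, fun k => (hv_mem k).1⟩
    have hvbu : IsBoundedUnder (· ≤ ·) atTop (fun k => avg IN k - avg ID k) :=
      isBoundedUnder_of ⟨1, fun k => (hv_mem k).2⟩
    have key : liminf (avg IN) atTop ≤
        limsup (avg ID) atTop + liminf (fun k => avg IN k - avg ID k) atTop := by
      have := liminf_add_le (f := atTop) (u := avg ID)
        (v := fun k => avg IN k - avg ID k) bDl bDu hvbl hvbu.isCoboundedUnder_ge
      have heq : (avg ID + fun k => avg IN k - avg ID k) = avg IN := by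
        funext k; simp [Pi.add_apply]
      rwa [heq] at this
    have hmono : liminf (fun k => avg IN k - avg ID k) atTop ≤ liminf (avg I2) atTop := by
      refine liminf_le_liminf ?_ hvbl b2u.isCoboundedUnder_ge
      refine Eventually.of_forall fun k => ?_
      have := avg_mono pw2low k
      rw [avg_add] at this
      linarith
    have h0 : (0:ℝ) ≤ liminf (avg I2) atTop :=
      le_liminf_of_le b2u.isCoboundedUnder_ge
        (Eventually.of_forall fun k => (avg_mem memI2 k).1)
    have : σN - ρD ≤ liminf (avg I2) atTop := by
      have := key.trans (by linarith : limsup (avg ID) atTop +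
        liminf (fun k => avg IN k - avg ID k) atTop ≤ ρD + liminf (avg I2) atTop)
      linarith
    exact max_le h0 this
  -- Mode 2 upper
  · have hup1 : limsup (avg I2) atTop ≤ ρN := by
      refine (limsup_le_limsup (Eventually.of_forall fun k => avg_mono pw2N k)
        b2l.isCoboundedUnder_le bNu).trans hAN2
    have hup2 : limsup (avg I2) atTop ≤ 1 - σD := by
      have hEq : ∀ᶠ k in atTop, avg I2 k ≤ 1 - avg ID k := by
        filter_upwards [eventually_ge_atTop 1] with k hk
        have := avg_mono pw2D k
        rw [avg_add, avg_one hk] at this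
        linarith
      have := limsup_le_limsup hEq b2l.isCoboundedUnder_le
        (isBoundedUnder_of ⟨1, fun k => by
          have := (avg_mem memID k).1; simp; linarith⟩)
      rw [limsup_const_sub atTop (avg ID) 1 bDu.isCoboundedUnder_ge bDl] at this
      linarith
    exact le_min hup1 hup2
  -- Mode 3 lower
  · have h0 : (0:ℝ) ≤ liminf (avg I3) atTop :=
      le_liminf_of_le b3u.isCoboundedUnder_ge
        (Eventually.of_forall fun k => (avg_mem memI3 k).1)
    have hsum : liminf (avg IN) atTop + liminf (avg ID) atTop ≤
        liminf (avg IN + avg ID) atTop :=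
      le_liminf_add bNl bNu bDl bDu.isCoboundedUnder_ge
    have hsumbl : IsBoundedUnder (· ≥ ·) atTop (fun k => (avg IN + avg ID) k - 1) :=
      isBoundedUnder_of ⟨-1, fun k => by
        have h1 := (avg_mem memIN k).1; have h2 := (avg_mem memID k).1
        simp [Pi.add_apply]; linarith⟩
    have hsumbu : IsBoundedUnder (· ≤ ·) atTop (fun k => (avg IN + avg ID) k - 1) :=
      isBoundedUnder_of ⟨1, fun k => by
        have h1 := (avg_mem memIN k).2; have h2 := (avg_mem memID k).2
        simp [Pi.add_apply]; linarith⟩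
    have hmono : liminf (fun k => (avg IN + avg ID) k - 1) atTop ≤ liminf (avg I3) atTop := by
      refine liminf_le_liminf ?_ hsumbl b3u.isCoboundedUnder_ge
      filter_upwards [eventually_ge_atTop 1] with k hk
      have h := avg_mono pw3low k
      have e1 : avg (fun t => IN t + ID t) k = avg IN k + avg ID k := avg_add IN ID k
      have e2 : avg (fun t => I3 t + 1) k = avg I3 k + 1 := by
        have := avg_add I3 (fun _ => (1:ℝ)) k
        rw [avg_one hk] at this
        exact this
      simp only [Pi.add_apply]
      rw [e1, e2] at h
      linarith
    have hsub : liminf (fun k => (avg IN + avg ID) k - 1) atTop =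
        liminf (avg IN + avg ID) atTop - 1 := by
      have hbu : IsBoundedUnder (· ≤ ·) atTop (avg IN + avg ID) :=
        isBoundedUnder_of ⟨2, fun k => by
          have h1 := (avg_mem memIN k).2; have h2 := (avg_mem memID k).2
          simp [Pi.add_apply]; linarith⟩
      have hbl : IsBoundedUnder (· ≥ ·) atTop (avg IN + avg ID) :=
        isBoundedUnder_of ⟨0, fun k => by
          have h1 := (avg_mem memIN k).1; have h2 := (avg_mem memID k).1
          simp [Pi.add_apply]; linarith⟩
      exact liminf_sub_const atTop (avg IN + avg ID) 1 hbu.isCoboundedUnder_ge hbl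
    have : σN + σD - 1 ≤ liminf (avg I3) atTop := by
      rw [hsub] at hmono
      linarith
    exact max_le h0 this
  -- Mode 3 upper
  · have hup1 : limsup (avg I3) atTop ≤ ρN :=
      (limsup_le_limsup (Eventually.of_forall fun k => avg_mono pw3N k)
        b3l.isCoboundedUnder_le bNu).trans hAN2
    have hup2 : limsup (avg I3) atTop ≤ ρD :=
      (limsup_le_limsup (Eventually.of_forall fun k => avg_mono pw3D k)
        b3l.isCoboundedUnder_le bDu).trans hAD2
    exact le_min hup1 hup2

end Stmt9Aux

/-- **Proposition 2 of the paper.**  Let `l_N, l_D` be the failure indicators of the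
delay-free and one-step-delayed channels, with a.s. long-run average bounds
`σ_N ≤ avg l_N ≤ ρ_N` and `σ_D ≤ avg l_D ≤ ρ_D`.  Define the mode signal
`r(t) = 1` if `l_N(t) = 0`, `r(t) = 2` if `l_N(t) = 1, l_D(t) = 0`, and `r(t) = 3` if
`l_N(t) = 1, l_D(t) = 1`.  Then a.s. the long-run activity averages of the three modes
satisfy the bounds `ρ̲₁ = 1−ρ_N`, `ρ̄₁ = 1−σ_N`, `ρ̲₂ = max{0, σ_N−ρ_D}`,
`ρ̄₂ = min{ρ_N, 1−σ_D}`, `ρ̲₃ = max{0, σ_N+σ_D−1}`, `ρ̄₃ = min{ρ_N, ρ_D}`. -/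
theorem stmt_9 {Ω : Type*} [MeasurableSpace Ω] (μ : Measure Ω) [IsProbabilityMeasure μ]
    (lN lD : ℕ → Ω → Bool)
    (σN σD ρN ρD : ℝ)
    (hσN : σN ∈ Set.Icc (0 : ℝ) 1) (hσD : σD ∈ Set.Icc (0 : ℝ) 1)
    (hρN : ρN ∈ Set.Icc (0 : ℝ) 1) (hρD : ρD ∈ Set.Icc (0 : ℝ) 1)
    (hN : ∀ᵐ ω ∂μ,
      σN ≤ liminf (fun k : ℕ =>
        (1 / (k : ℝ)) * ∑ t ∈ Finset.range k, (if lN t ω then (1 : ℝ) else 0)) atTop ∧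
      limsup (fun k : ℕ =>
        (1 / (k : ℝ)) * ∑ t ∈ Finset.range k, (if lN t ω then (1 : ℝ) else 0)) atTop ≤ ρN)
    (hD : ∀ᵐ ω ∂μ,
      σD ≤ liminf (fun k : ℕ =>
        (1 / (k : ℝ)) * ∑ t ∈ Finset.range k, (if lD t ω then (1 : ℝ) else 0)) atTop ∧
      limsup (fun k : ℕ =>
        (1 / (k : ℝ)) * ∑ t ∈ Finset.range k, (if lD t ω then (1 : ℝ) else 0)) atTop ≤ ρD)
    (r : ℕ → Ω → ℕ)
    (hr : ∀ t ω, r t ω = if lN t ω = false then 1 else if lD t ω = false then 2 else 3) :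
    ∀ᵐ ω ∂μ,
      ((1 - ρN ≤ liminf (fun k : ℕ =>
          (1 / (k : ℝ)) * ∑ t ∈ Finset.range k, (if r t ω = 1 then (1 : ℝ) else 0)) atTop ∧
        limsup (fun k : ℕ =>
          (1 / (k : ℝ)) * ∑ t ∈ Finset.range k, (if r t ω = 1 then (1 : ℝ) else 0)) atTop
          ≤ 1 - σN) ∧
      (max 0 (σN - ρD) ≤ liminf (fun k : ℕ =>
          (1 / (k : ℝ)) * ∑ t ∈ Finset.range k, (if r t ω = 2 then (1 : ℝ) else 0)) atTop ∧
        limsup (fun k : ℕ =>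
          (1 / (k : ℝ)) * ∑ t ∈ Finset.range k, (if r t ω = 2 then (1 : ℝ) else 0)) atTop
          ≤ min ρN (1 - σD)) ∧
      (max 0 (σN + σD - 1) ≤ liminf (fun k : ℕ =>
          (1 / (k : ℝ)) * ∑ t ∈ Finset.range k, (if r t ω = 3 then (1 : ℝ) else 0)) atTop ∧
        limsup (fun k : ℕ =>
          (1 / (k : ℝ)) * ∑ t ∈ Finset.range k, (if r t ω = 3 then (1 : ℝ) else 0)) atTop
          ≤ min ρN ρD)) := by
  filter_upwards [hN, hD] with ω hNω hDω
  exact Stmt9Aux.prop2_aux (fun t => lN t ω) (fun t => lD t ω) σN σD ρN ρD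
    hNω.1 hNω.2 hDω.1 hDω.2 (fun t => r t ω) (fun t => hr t ω)
end

section
/- For all positive integers α, h, M, the binomial coefficient satisfies C(αh+M−1, M−1) ≤ α^{M−1} · C(h+M−1, M−1). -/
lemma asc_aux (a h : ℕ) (ha : 0 < a) : ∀ k : ℕ,
    Nat.ascFactorial (a * h + 1) k ≤ a ^ k * Nat.ascFactorial (h + 1) k := by
  intro k
  induction k with
  | zero => simp
  | succ k ih =>
    rw [Nat.ascFactorial_succ, Nat.ascFactorial_succ, pow_succ]
    calc (a * h + 1 + k) * Nat.ascFactorial (a * h + 1) k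
        ≤ (a * (h + 1 + k)) * (a ^ k * Nat.ascFactorial (h + 1) k) := by
          apply Nat.mul_le_mul _ ih
          have : 1 + k ≤ a * (1 + k) := Nat.le_mul_of_pos_left _ ha
          nlinarith
      _ = a ^ k * a * ((h + 1 + k) * Nat.ascFactorial (h + 1) k) := by ring

/-- For all positive integers `α, h, M`, `C(αh+M-1, M-1) ≤ α^(M-1) · C(h+M-1, M-1)`.
(Paper's claim `f'(αh, M) ≤ α^(M-1) · f'(h, M)`.) -/
theorem stmt_16 (α h M : ℕ) (hα : 0 < α) (hh : 0 < h) (hM : 0 < M) :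
    Nat.choose (α * h + M - 1) (M - 1) ≤ α ^ (M - 1) * Nat.choose (h + M - 1) (M - 1) := by
  set k := M - 1 with hk
  have hM' : M = k + 1 := (Nat.succ_pred_eq_of_pos hM).symm
  have h1 : α * h + M - 1 = α * h + k := by omega
  have h2 : h + M - 1 = h + k := by omega
  rw [h1, h2]
  have key := asc_aux α h hα k
  rw [Nat.ascFactorial_eq_factorial_mul_choose, Nat.ascFactorial_eq_factorial_mul_choose] at key
  have : Nat.factorial k * (α * h + k).choose k ≤ Nat.factorial k * (α ^ k * (h + k).choose k) := by
    calc Nat.factorial k * (α * h + k).choose k ≤ α ^ k * (Nat.factorial k * (h + k).choose k) := key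
    _ = Nat.factorial k * (α ^ k * (h + k).choose k) := by ring
  exact Nat.le_of_mul_le_mul_left this (Nat.factorial_pos k)
end

section
/- For all positive integers α, h, M, the binomial coefficient satisfies C(h+αM−1, αM−1) ≤ α^h · C(h+M−1, M−1). -/
lemma asc_le (α M h : ℕ) (hα : 0 < α) :
    (α * M).ascFactorial h ≤ α ^ h * M.ascFactorial h := by
  induction h with
  | zero => simp
  | succ k ih =>
    rw [Nat.ascFactorial_succ, Nat.ascFactorial_succ, pow_succ]
    calc (α * M + k) * (α * M).ascFactorial k
        ≤ (α * (M + k)) * ((α ^ k) * M.ascFactorial k) := by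
          apply Nat.mul_le_mul _ ih
          rw [Nat.mul_add]
          exact Nat.add_le_add_left (Nat.le_mul_of_pos_left k hα) _
      _ = α ^ k * α * ((M + k) * M.ascFactorial k) := by ring
      
lemma choose_symm' (h N : ℕ) (hN : 0 < N) :
    (h + N - 1).choose (N - 1) = (h + N - 1).choose h := by
  have h1 : h ≤ h + N - 1 := by omega
  have h2 : h + N - 1 - h = N - 1 := by omega
  rw [← h2, Nat.choose_symm h1]

/-- For all positive integers `α, h, M`, `C(h+αM-1, αM-1) ≤ α^h · C(h+M-1, M-1)`.
(Paper's claim `f'(h, αM) ≤ α^h · f'(h, M)`.) -/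
theorem stmt_17 (α h M : ℕ) (hα : 0 < α) (hh : 0 < h) (hM : 0 < M) :
    Nat.choose (h + α * M - 1) (α * M - 1) ≤ α ^ h * Nat.choose (h + M - 1) (M - 1) := by
  rw [choose_symm' h (α * M) (Nat.mul_pos hα hM), choose_symm' h M hM]
  have key := asc_le α M h hα
  rw [Nat.ascFactorial_eq_factorial_mul_choose', Nat.ascFactorial_eq_factorial_mul_choose'] at key
  have : h.factorial * (α * M + h - 1).choose h ≤ h.factorial * (α ^ h * (M + h - 1).choose h) := by
    calc _ ≤ α ^ h * (h.factorial * (M + h - 1).choose h) := key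
      _ = _ := by ring
  have := Nat.le_of_mul_le_mul_left this h.factorial_pos
  rwa [Nat.add_comm (α*M) h, Nat.add_comm M h] at this
end
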